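/- arXiv:2503.24202 — 7 statements merged into one kernel-verified Lean document; each statement's English description precedes it below -/
import Mathlib

section
/- There exists a constant C > 0 such that for every odd positive integer n there exist unit vectors v_1, …, v_n in ℝ² for which the probability (over independent uniform signs ε_1, …, ε_n ∈ {−1, 1}) that ‖ε_1 v_1 + ⋯ + ε_n v_n‖₂ ≤ 1 is at most C / n^{3/2}. -/
/-- The probability, over independent uniform signs `ε ∈ {-1,1}^n`, that the
predicate `P` holds of the sign vector. -/
noncomputable def signProb (n : ℕ) (P : (Fin n → ℝ) → Prop) : ℝ :=
  (Nat.card {ε : Fin n → Bool // P fun i => if ε i then 1 else -1} : ℝ) / 2 ^ n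

set_option maxHeartbeats 1000000

open Real Finset

/-! ### Auxiliary real-arithmetic lemmas -/

private lemma aux_sq_ge {x c : ℝ} (hc : 0 ≤ c) (h : c ≤ |x|) : c^2 ≤ x^2 := by
  nlinarith [sq_abs x, abs_nonneg x]

private lemma aux_cos_lt (c s : ℝ) (h : s^2 + c^2 = 1) (hs : 0 < s) : c < 1 := by nlinarith

private lemma aux_s3 (s : ℝ) (hs : 0 ≤ s) (h : s^2 = 3) : s ≤ 1.8 := by nlinarith

private lemma aux_stepA (s Y : ℝ) (hs : s^2 = 3) (hsnn : 0 ≤ s)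
    (h1 : s - 1/2 ≤ |Y|) (h2 : Y^2 ≤ 1) : False := by
  have h18 : s ≤ 1.8 := aux_s3 s hsnn hs
  have hc : 0 ≤ s - 1/2 := by nlinarith
  have := aux_sq_ge hc h1
  nlinarith

private lemma aux_low (ab e N q : ℝ) (h1 : -N ≤ ab) (h2 : 0 ≤ e) (h3 : e ≤ q)
    (h4 : 0 ≤ N) (h5 : N*q ≤ 1/8) : -(1/4) ≤ 2*ab*e := by
  nlinarith [mul_nonneg (by linarith : (0:ℝ) ≤ ab + N) h2, mul_le_mul_of_nonneg_left h3 h4]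

private lemma aux_sqhalf (x : ℝ) (h0 : 0 ≤ x) (h : x ≤ 1/2) : x*x ≤ 1/4 := by nlinarith

private lemma int_abs_cast_le {p : ℤ} {c : ℤ} (h : c ≤ |p|) : (c:ℝ) ≤ |(p:ℝ)| := by
  rw [← Int.cast_abs]; exact_mod_cast h

/-! ### The key geometric lemma: characterization of small signed sums -/

private theorem keylem (n : ℕ) (hn : 1 ≤ n) (γ : ℝ) (hγ0 : 0 < γ) (hγ : γ ≤ 1/(2*n))
    (p1 p2 p3 : ℤ) (h1 : |p1| ≤ (n:ℤ)) (h2 : |p2| ≤ (n:ℤ)) (h3 : |p3| ≤ (n:ℤ))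
    (e1 : Even p1) (e3 : Even p3) (o2 : Odd p2)
    (h : ((p2:ℝ) * Real.cos γ - ((p1:ℝ)+(p3:ℝ))/2)^2
       + (((p3:ℝ)-(p1:ℝ)) * (Real.sqrt 3/2) + (p2:ℝ) * Real.sin γ)^2 ≤ 1) :
    p1 = 0 ∧ p3 = 0 ∧ (p2 = 1 ∨ p2 = -1) := by
  have hnR : (1:ℝ) ≤ (n:ℝ) := by exact_mod_cast hn
  have hnpos : (0:ℝ) < (n:ℝ) := by linarith
  have hhalf : γ ≤ 1/2 := by
    refine hγ.trans ?_
    rw [div_le_div_iff₀ (by linarith) (by norm_num)]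
    linarith
  have hγpi : γ < Real.pi := by nlinarith [Real.pi_gt_three]
  have hsin0 : 0 < Real.sin γ := Real.sin_pos_of_pos_of_lt_pi hγ0 hγpi
  have hsinle : Real.sin γ ≤ γ := Real.sin_le hγ0.le
  have hpyth : Real.sin γ ^ 2 + Real.cos γ ^ 2 = 1 := Real.sin_sq_add_cos_sq γ
  have hcos1 : Real.cos γ < 1 := aux_cos_lt _ _ hpyth hsin0
  have hcosq : 1 - Real.cos γ ≤ γ^2/2 := by
    have := Real.one_sub_sq_div_two_le_cos (x := γ); linarith
  have h2r : |(p2:ℝ)| ≤ (n:ℝ) := by exact_mod_cast h2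
  have h1r : |(p1:ℝ)| ≤ (n:ℝ) := by exact_mod_cast h1
  have hγn : γ * n ≤ 1/2 := by
    have h' := mul_le_mul_of_nonneg_right hγ hnpos.le
    have heq : (1/(2*(n:ℝ))) * n = 1/2 := by field_simp
    linarith [heq ▸ h']
  have hB2 : |(p2:ℝ) * Real.sin γ| ≤ 1/2 := by
    rw [abs_mul, abs_of_pos hsin0]
    have h' : |(p2:ℝ)| * Real.sin γ ≤ (n:ℝ) * γ :=
      mul_le_mul h2r hsinle hsin0.le hnpos.le
    have hcomm : (n:ℝ) * γ = γ * (n:ℝ) := mul_comm _ _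
    linarith
  have hs3 : Real.sqrt 3 ^ 2 = 3 := Real.sq_sqrt (by norm_num)
  have hs3nn : 0 ≤ Real.sqrt 3 := Real.sqrt_nonneg 3
  have hA : p1 = p3 := by
    symm
    by_contra hne
    have hd : 2 ≤ |p3 - p1| := by
      rcases (e3.sub e1) with ⟨k, hk⟩
      have h2' : 2 ≤ p3 - p1 ∨ p3 - p1 ≤ -2 := by omega
      rcases h2' with h'|h'
      · exact le_abs.mpr (Or.inl h')
      · exact le_abs.mpr (Or.inr (by omega))
    have hdr : (2:ℝ) ≤ |((p3:ℝ) - (p1:ℝ))| := by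
      have := int_abs_cast_le hd; push_cast at this; linarith
    have ha : Real.sqrt 3 ≤ |((p3:ℝ)-(p1:ℝ)) * (Real.sqrt 3/2)| := by
      rw [abs_mul, abs_of_nonneg (by positivity : (0:ℝ) ≤ Real.sqrt 3/2)]
      nlinarith [mul_le_mul_of_nonneg_right hdr (by positivity : (0:ℝ) ≤ Real.sqrt 3/2)]
    have htri : |((p3:ℝ)-(p1:ℝ)) * (Real.sqrt 3/2)|
        ≤ |((p3:ℝ)-(p1:ℝ)) * (Real.sqrt 3/2) + (p2:ℝ) * Real.sin γ| + |(p2:ℝ) * Real.sin γ| := by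
      have h' := abs_add_le (((p3:ℝ)-(p1:ℝ)) * (Real.sqrt 3/2) + (p2:ℝ) * Real.sin γ)
        (-((p2:ℝ) * Real.sin γ))
      rw [abs_neg] at h'
      have heq : ((p3:ℝ)-(p1:ℝ)) * (Real.sqrt 3/2) + (p2:ℝ) * Real.sin γ + -((p2:ℝ) * Real.sin γ)
          = ((p3:ℝ)-(p1:ℝ)) * (Real.sqrt 3/2) := by ring
      rw [heq] at h'; exact h'
    have hYabs : Real.sqrt 3 - 1/2
        ≤ |((p3:ℝ)-(p1:ℝ)) * (Real.sqrt 3/2) + (p2:ℝ) * Real.sin γ| := by linarith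
    have hY2 : (((p3:ℝ)-(p1:ℝ)) * (Real.sqrt 3/2) + (p2:ℝ) * Real.sin γ)^2 ≤ 1 := by
      linarith [sq_nonneg ((p2:ℝ) * Real.cos γ - ((p1:ℝ)+(p3:ℝ))/2)]
    exact aux_stepA _ _ hs3 hs3nn hYabs hY2
  subst hA
  have hid : ((p2:ℝ) * Real.cos γ - ((p1:ℝ)+(p1:ℝ))/2)^2
       + (((p1:ℝ)-(p1:ℝ)) * (Real.sqrt 3/2) + (p2:ℝ) * Real.sin γ)^2
       = ((p1:ℝ) - (p2:ℝ))^2 + 2*(p1:ℝ)*(p2:ℝ)*(1 - Real.cos γ) := by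
    linear_combination ((p2:ℝ)^2) * hpyth
  rw [hid] at h
  by_cases hp1 : p1 = 0
  · subst hp1
    have hsq : (p2:ℝ)^2 ≤ 1 := by
      push_cast at h
      nlinarith [h]
    have habs1 : |(p2:ℝ)| ≤ 1 := by nlinarith [sq_abs (p2:ℝ), abs_nonneg (p2:ℝ)]
    have hp2i : |p2| ≤ 1 := by rw [← Int.cast_abs] at habs1; exact_mod_cast habs1
    have hfin : p2 = 1 ∨ p2 = -1 := by
      rcases o2 with ⟨k, hk⟩
      rcases abs_le.mp hp2i with ⟨hl, hr⟩
      omega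
    exact ⟨rfl, rfl, hfin⟩
  · exfalso
    have hp2ne : p2 ≠ 0 := by rcases o2 with ⟨k, hk⟩; omega
    have hodd : Odd (p1 - p2) := e1.sub_odd o2
    rcases lt_or_gt_of_ne (mul_ne_zero hp1 hp2ne) with hneg|hpos
    · have hd3 : 3 ≤ |p1 - p2| := by
        rcases lt_trichotomy p1 0 with hn1|hz|hp1p
        · have hpp : 0 < p2 := by nlinarith
          have hle : p1 - p2 ≤ -3 := by
            have : p1 ≤ -2 := by rcases e1 with ⟨k,hk⟩; omega
            omega
          exact le_abs.mpr (Or.inr (by omega))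
        · exact absurd hz hp1
        · have hpp : p2 < 0 := by nlinarith
          have hge : 3 ≤ p1 - p2 := by
            have : 2 ≤ p1 := by rcases e1 with ⟨k,hk⟩; omega
            omega
          exact le_abs.mpr (Or.inl hge)
      have hsq9 : (9:ℝ) ≤ ((p1:ℝ) - (p2:ℝ))^2 := by
        have h' := int_abs_cast_le hd3
        push_cast at h'
        exact (by norm_num : ((3:ℝ))^2 = 9) ▸ aux_sq_ge (by norm_num) h'
      have hprodlow : -((n:ℝ)*(n:ℝ)) ≤ (p1:ℝ)*(p2:ℝ) := by
        have habsmul : |(p1:ℝ)*(p2:ℝ)| ≤ (n:ℝ)*(n:ℝ) := by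
          rw [abs_mul]
          exact mul_le_mul h1r h2r (abs_nonneg _) (by linarith)
        linarith [neg_abs_le ((p1:ℝ)*(p2:ℝ))]
      have hNq : ((n:ℝ)*(n:ℝ))*(γ^2/2) ≤ 1/8 := by
        have hh := aux_sqhalf (γ*(n:ℝ)) (by positivity) hγn
        have heq2 : ((n:ℝ)*(n:ℝ))*(γ^2/2) = ((γ*(n:ℝ))*(γ*(n:ℝ)))/2 := by ring
        linarith
      have hlow : -(1/4 : ℝ) ≤ 2*((p1:ℝ)*(p2:ℝ))*(1 - Real.cos γ) :=
        aux_low _ _ _ _ hprodlow (by linarith) hcosq (by positivity) hNq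
      have hassoc : 2*(p1:ℝ)*(p2:ℝ)*(1 - Real.cos γ)
          = 2*((p1:ℝ)*(p2:ℝ))*(1 - Real.cos γ) := by ring
      linarith
    · have hd1 : 1 ≤ |p1 - p2| := by
        rcases hodd with ⟨k, hk⟩
        have h2' : 1 ≤ p1 - p2 ∨ p1 - p2 ≤ -1 := by omega
        rcases h2' with h'|h'
        · exact le_abs.mpr (Or.inl h')
        · exact le_abs.mpr (Or.inr (by omega))
      have hsq1 : (1:ℝ) ≤ ((p1:ℝ) - (p2:ℝ))^2 := by
        have h' := int_abs_cast_le hd1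
        push_cast at h'
        exact (by norm_num : ((1:ℝ))^2 = 1) ▸ aux_sq_ge (by norm_num) h'
      have hposR : (1:ℝ) ≤ (p1:ℝ)*(p2:ℝ) := by exact_mod_cast hpos
      have hstrict : (0:ℝ) < ((p1:ℝ)*(p2:ℝ))*(1 - Real.cos γ) :=
        mul_pos (by linarith) (by linarith)
      have hassoc : 2*(p1:ℝ)*(p2:ℝ)*(1 - Real.cos γ)
          = 2*((p1:ℝ)*(p2:ℝ))*(1 - Real.cos γ) := by ring
      linarith

/-! ### Counting lemmas -/

private lemma toSet_inj {k : ℕ} : Function.Injective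
    (fun g : Fin k → Bool => univ.filter fun i => g i = true) := by
  intro g g' hgg
  funext i
  dsimp only at hgg
  have h1 : i ∈ univ.filter (fun i => g i = true) ↔ i ∈ univ.filter (fun i => g' i = true) := by
    rw [hgg]
  simp only [Finset.mem_filter, Finset.mem_univ, true_and] at h1
  cases hg : g i <;> cases hg' : g' i
  · rfl
  · exact absurd (h1.mpr hg') (by simp [hg])
  · exact absurd (h1.mp hg) (by simp [hg'])
  · rfl

private lemma card_cnt_eq_le (k j : ℕ) :
    Nat.card {g : Fin k → Bool // (univ.filter fun i => g i = true).card = j} ≤ k.choose j := by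
  have hinj : Function.Injective
      (fun x : {g : Fin k → Bool // (univ.filter fun i => g i = true).card = j} =>
        (⟨univ.filter fun i => x.1 i = true, x.2⟩ : {s : Finset (Fin k) // s.card = j})) := by
    intro x y hxy
    apply Subtype.ext
    apply toSet_inj
    exact congrArg Subtype.val hxy
  calc Nat.card {g : Fin k → Bool // (univ.filter fun i => g i = true).card = j}
      ≤ Nat.card {s : Finset (Fin k) // s.card = j} := Nat.card_le_card_of_injective _ hinj
    _ = k.choose j := by
        rw [Nat.card_eq_fintype_card, Fintype.card_finset_len, Fintype.card_fin]

private lemma card_cnt_or_le (k j j' : ℕ) :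
    Nat.card {g : Fin k → Bool //
      (univ.filter fun i => g i = true).card = j ∨ (univ.filter fun i => g i = true).card = j'}
      ≤ k.choose j + k.choose j' := by
  have hinj : Function.Injective
      (fun x : {g : Fin k → Bool //
          (univ.filter fun i => g i = true).card = j
            ∨ (univ.filter fun i => g i = true).card = j'} =>
        (⟨univ.filter fun i => x.1 i = true, x.2⟩ :
          {s : Finset (Fin k) // s.card = j ∨ s.card = j'})) := by
    intro x y hxy
    apply Subtype.ext
    apply toSet_inj
    exact congrArg Subtype.val hxy
  calc Nat.card {g : Fin k → Bool //
      (univ.filter fun i => g i = true).card = j ∨ (univ.filter fun i => g i = true).card = j'}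
      ≤ Nat.card {s : Finset (Fin k) // s.card = j ∨ s.card = j'} :=
        Nat.card_le_card_of_injective _ hinj
    _ = Fintype.card {s : Finset (Fin k) // s.card = j ∨ s.card = j'} := Nat.card_eq_fintype_card
    _ ≤ Fintype.card {s : Finset (Fin k) // s.card = j}
        + Fintype.card {s : Finset (Fin k) // s.card = j'} := Fintype.card_subtype_or _ _
    _ = k.choose j + k.choose j' := by
        rw [Fintype.card_finset_len, Fintype.card_finset_len, Fintype.card_fin]

private lemma cb_sq (m : ℕ) : Nat.centralBinom m ^ 2 * (m+1) ≤ 16 ^ m := by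
  induction m with
  | zero => simp [Nat.centralBinom]
  | succ m ih =>
    have key : (m+1) * Nat.centralBinom (m+1) = 2 * (2*m+1) * Nat.centralBinom m :=
      Nat.succ_mul_centralBinom_succ m
    refine Nat.le_of_mul_le_mul_left ?_ (show 0 < (m+1)^3 by positivity)
    calc (m+1)^3 * (Nat.centralBinom (m+1) ^ 2 * (m+2))
        = ((m+1) * Nat.centralBinom (m+1))^2 * ((m+1)*(m+2)) := by ring
      _ = (2*(2*m+1)*Nat.centralBinom m)^2 * ((m+1)*(m+2)) := by rw [key]
      _ = 4*(2*m+1)^2*(m+2) * (Nat.centralBinom m ^ 2 * (m+1)) := by ring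
      _ ≤ 4*(2*m+1)^2*(m+2) * 16^m := Nat.mul_le_mul_left _ ih
      _ ≤ (16*(m+1)^3) * 16^m := Nat.mul_le_mul_right _ (by nlinarith)
      _ = (m+1)^3 * 16^(m+1) := by ring

private lemma choose_odd_le (b : ℕ) : (2*b+1).choose b ≤ 2 * Nat.centralBinom b := by
  have h1 : (2*b+1) * (2*b).choose b = (2*b+1).choose (b+1) * (b+1) := Nat.add_one_mul_choose_eq (2*b) b
  have hsymm : (2*b+1).choose (b+1) = (2*b+1).choose b := by
    have hs := Nat.choose_symm (show b+1 ≤ 2*b+1 by omega)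
    have heq : (2*b+1) - (b+1) = b := by omega
    rw [heq] at hs
    exact hs.symm
  rw [hsymm] at h1
  have h2 : (2*b+1).choose b * (b+1) ≤ (2 * (2*b).choose b) * (b+1) := by
    rw [← h1]; nlinarith [Nat.zero_le ((2*b).choose b)]
  have := Nat.le_of_mul_le_mul_right h2 (by omega : 0 < b+1)
  simpa [Nat.centralBinom] using this

private lemma sum_pm {k : ℕ} (g : Fin k → Bool) :
    (∑ i, if g i then (1:ℝ) else -1) = 2 * ((univ.filter fun i => g i = true).card : ℝ) - k := by
  have h : ∀ i, (if g i then (1:ℝ) else -1) = 2 * (if g i = true then (1:ℝ) else 0) - 1 := by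
    intro i; by_cases h : g i <;> simp [h] <;> norm_num
  rw [Finset.sum_congr rfl (fun i _ => h i), Finset.sum_sub_distrib, ← Finset.mul_sum,
    Finset.sum_boole]
  simp [Finset.card_univ]

private noncomputable def e2 (x y : ℝ) : EuclideanSpace ℝ (Fin 2) := !₂[x, y]

private lemma e2_zero (x y : ℝ) : (e2 x y) 0 = x := rfl
private lemma e2_one (x y : ℝ) : (e2 x y) 1 = y := rfl

private lemma norm_pair (x y : ℝ) (h : x^2 + y^2 = 1) : ‖e2 x y‖ = 1 := by
  rw [EuclideanSpace.norm_eq, Fin.sum_univ_two]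
  simp only [e2_zero, e2_one, Real.norm_eq_abs,
    sq_abs]
  rw [h, Real.sqrt_one]

theorem odd_counterexample_radius_one :
    ∃ C : ℝ, 0 < C ∧
      ∀ n : ℕ, 0 < n → Odd n →
        ∃ v : Fin n → EuclideanSpace ℝ (Fin 2), (∀ i, ‖v i‖ = 1) ∧
          signProb n (fun ε => ‖∑ i, ε i • v i‖ ≤ 1) ≤ C / (n : ℝ) ^ ((3 : ℝ) / 2) := by
  refine ⟨30, by norm_num, ?_⟩
  intro n hn hodd
  -- sizes
  set a := n / 6 with ha
  have h6a : 6 * a ≤ n := by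
    have := Nat.div_mul_le_self n 6
    omega
  have h6a' : n < 6 * a + 6 := by
    have h1 := Nat.div_add_mod n 6
    have h2 := Nat.mod_lt n (show 0 < 6 by norm_num)
    omega
  set A := 2 * a with hA
  set M := n - 4 * a with hM
  have hModd : Odd M := by
    rcases hodd with ⟨m0, hm0⟩
    refine ⟨m0 - 2*a, by omega⟩
  set b := M / 2 with hb
  have hMb : M = 2 * b + 1 := by
    rcases hModd with ⟨k, hk⟩
    omega
  have hsz : A + (M + A) = n := by omega
  have hn4 : n = 4*a + 2*b + 1 := by omega
  clear_value b M A a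
  -- the tilt angle
  set γ : ℝ := 1 / (2 * (n : ℝ)) with hγdef
  have hnR : (1:ℝ) ≤ (n:ℝ) := by exact_mod_cast hn
  have hγ0 : 0 < γ := by rw [hγdef]; positivity
  -- vectors
  set u1 : EuclideanSpace ℝ (Fin 2) := e2 (-1/2) (-(Real.sqrt 3/2)) with hu1
  set u2 : EuclideanSpace ℝ (Fin 2) := e2 (Real.cos γ) (Real.sin γ) with hu2
  set u3 : EuclideanSpace ℝ (Fin 2) := e2 (-1/2) (Real.sqrt 3/2) with hu3
  set E : (Fin A ⊕ (Fin M ⊕ Fin A)) ≃ Fin n :=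
    ((Equiv.sumCongr (Equiv.refl (Fin A)) finSumFinEquiv).trans finSumFinEquiv).trans
      (finCongr hsz) with hE
  set W : (Fin A ⊕ (Fin M ⊕ Fin A)) → EuclideanSpace ℝ (Fin 2) :=
    Sum.elim (fun _ => u1) (Sum.elim (fun _ => u2) (fun _ => u3)) with hW
  refine ⟨fun i => W (E.symm i), ?_, ?_⟩
  · -- unit norms
    intro i
    have hs3 : Real.sqrt 3 ^ 2 = 3 := Real.sq_sqrt (by norm_num)
    have hv1 : (-1/2 : ℝ)^2 + (-(Real.sqrt 3/2))^2 = 1 := by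
      have hh : (-1/2 : ℝ)^2 + (-(Real.sqrt 3/2))^2 = 1/4 + (Real.sqrt 3^2)/4 := by ring
      rw [hh, hs3]; norm_num
    have hv3 : (-1/2 : ℝ)^2 + (Real.sqrt 3/2)^2 = 1 := by
      have hh : (-1/2 : ℝ)^2 + (Real.sqrt 3/2)^2 = 1/4 + (Real.sqrt 3^2)/4 := by ring
      rw [hh, hs3]; norm_num
    have hv2 : (Real.cos γ)^2 + (Real.sin γ)^2 = 1 := by
      have := Real.sin_sq_add_cos_sq γ; linarith
    show ‖W (E.symm i)‖ = 1
    rcases hx : E.symm i with x | x | x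
    · exact norm_pair _ _ hv1
    · exact norm_pair _ _ hv2
    · exact norm_pair _ _ hv3
  · -- the probability bound
    have hγle : γ ≤ 1/(2*(n:ℝ)) := le_of_eq hγdef
    have hAn : A ≤ n := by omega
    have hMn : M ≤ n := by omega
    have hAZ : (A:ℤ) = 2*(a:ℤ) := by exact_mod_cast hA
    have hMZ : (M:ℤ) = 2*(b:ℤ)+1 := by exact_mod_cast hMb
    -- master implication
    have hmaster : ∀ ε : Fin n → Bool,
        (‖∑ i, (if ε i then (1:ℝ) else -1) • (W (E.symm i))‖ ≤ 1) →
        ((univ.filter fun i : Fin A => ε (E (Sum.inl i)) = true).card = a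
         ∧ ((univ.filter fun j : Fin M => ε (E (Sum.inr (Sum.inl j))) = true).card = b
            ∨ (univ.filter fun j : Fin M => ε (E (Sum.inr (Sum.inl j))) = true).card = b+1)
         ∧ (univ.filter fun l : Fin A => ε (E (Sum.inr (Sum.inr l))) = true).card = a) := by
      intro ε hε
      set k1 := (univ.filter fun i : Fin A => ε (E (Sum.inl i)) = true).card with hk1
      set k2 := (univ.filter fun j : Fin M => ε (E (Sum.inr (Sum.inl j))) = true).card with hk2
      set k3 := (univ.filter fun l : Fin A => ε (E (Sum.inr (Sum.inr l))) = true).card with hk3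
      set r1 : ℝ := ∑ i : Fin A, (if ε (E (Sum.inl i)) then (1:ℝ) else -1) with hr1
      set r2 : ℝ := ∑ j : Fin M, (if ε (E (Sum.inr (Sum.inl j))) then (1:ℝ) else -1) with hr2
      set r3 : ℝ := ∑ l : Fin A, (if ε (E (Sum.inr (Sum.inr l))) then (1:ℝ) else -1) with hr3
      have hsplit : ∑ i, (if ε i then (1:ℝ) else -1) • (W (E.symm i))
          = r1 • u1 + (r2 • u2 + r3 • u3) := by
        rw [← Equiv.sum_comp E (fun i => (if ε i then (1:ℝ) else -1) • (W (E.symm i)))]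
        simp only [Equiv.symm_apply_apply]
        rw [Fintype.sum_sum_type, Fintype.sum_sum_type]
        simp only [hW, Sum.elim_inl, Sum.elim_inr]
        rw [hr1, hr2, hr3, Finset.sum_smul, Finset.sum_smul, Finset.sum_smul]
      rw [hsplit] at hε
      have hT0 : (r1 • u1 + (r2 • u2 + r3 • u3)) 0
          = r1*(-1/2) + (r2*Real.cos γ + r3*(-1/2)) := by
        simp only [PiLp.add_apply, PiLp.smul_apply, hu1, hu2, hu3, e2_zero, smul_eq_mul]
      have hT1 : (r1 • u1 + (r2 • u2 + r3 • u3)) 1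
          = r1*(-(Real.sqrt 3/2)) + (r2*Real.sin γ + r3*(Real.sqrt 3/2)) := by
        simp only [PiLp.add_apply, PiLp.smul_apply, hu1, hu2, hu3, e2_one, smul_eq_mul]
      have hsq : (r1*(-1/2) + (r2*Real.cos γ + r3*(-1/2)))^2
          + (r1*(-(Real.sqrt 3/2)) + (r2*Real.sin γ + r3*(Real.sqrt 3/2)))^2 ≤ 1 := by
        rw [EuclideanSpace.norm_eq, Fin.sum_univ_two] at hε
        rw [hT0, hT1] at hε
        simp only [Real.norm_eq_abs, sq_abs] at hε
        have hnn : (0:ℝ) ≤ (r1*(-1/2) + (r2*Real.cos γ + r3*(-1/2)))^2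
            + (r1*(-(Real.sqrt 3/2)) + (r2*Real.sin γ + r3*(Real.sqrt 3/2)))^2 := by positivity
        nlinarith [Real.sq_sqrt hnn, Real.sqrt_nonneg ((r1*(-1/2) + (r2*Real.cos γ + r3*(-1/2)))^2
            + (r1*(-(Real.sqrt 3/2)) + (r2*Real.sin γ + r3*(Real.sqrt 3/2)))^2)]
      have hk1A : k1 ≤ A := by
        rw [hk1]; exact le_trans (Finset.card_filter_le _ _) (by simp)
      have hk2M : k2 ≤ M := by
        rw [hk2]; exact le_trans (Finset.card_filter_le _ _) (by simp)
      have hk3A : k3 ≤ A := by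
        rw [hk3]; exact le_trans (Finset.card_filter_le _ _) (by simp)
      have hr1e : r1 = 2*(k1:ℝ) - A := by rw [hr1, hk1]; exact sum_pm _
      have hr2e : r2 = 2*(k2:ℝ) - M := by rw [hr2, hk2]; exact sum_pm _
      have hr3e : r3 = 2*(k3:ℝ) - A := by rw [hr3, hk3]; exact sum_pm _
      set p1 : ℤ := 2*(k1:ℤ) - A with hp1
      set p2 : ℤ := 2*(k2:ℤ) - M with hp2
      set p3 : ℤ := 2*(k3:ℤ) - A with hp3
      have hc1 : (p1:ℝ) = r1 := by rw [hp1, hr1e]; push_cast; ring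
      have hc2 : (p2:ℝ) = r2 := by rw [hp2, hr2e]; push_cast; ring
      have hc3 : (p3:ℝ) = r3 := by rw [hp3, hr3e]; push_cast; ring
      have hin : ((p2:ℝ) * Real.cos γ - ((p1:ℝ)+(p3:ℝ))/2)^2
          + (((p3:ℝ)-(p1:ℝ)) * (Real.sqrt 3/2) + (p2:ℝ) * Real.sin γ)^2 ≤ 1 := by
        calc ((p2:ℝ) * Real.cos γ - ((p1:ℝ)+(p3:ℝ))/2)^2
            + (((p3:ℝ)-(p1:ℝ)) * (Real.sqrt 3/2) + (p2:ℝ) * Real.sin γ)^2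
            = (r1*(-1/2) + (r2*Real.cos γ + r3*(-1/2)))^2
            + (r1*(-(Real.sqrt 3/2)) + (r2*Real.sin γ + r3*(Real.sqrt 3/2)))^2 := by
              rw [hc1, hc2, hc3]; ring
          _ ≤ 1 := hsq
      have hb1 : |p1| ≤ (n:ℤ) := by rw [hp1, abs_le]; omega
      have hb2 : |p2| ≤ (n:ℤ) := by rw [hp2, abs_le]; omega
      have hb3 : |p3| ≤ (n:ℤ) := by rw [hp3, abs_le]; omega
      have he1 : Even p1 := ⟨(k1:ℤ) - a, by rw [hp1]; omega⟩
      have he3 : Even p3 := ⟨(k3:ℤ) - a, by rw [hp3]; omega⟩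
      have ho2 : Odd p2 := ⟨(k2:ℤ) - b - 1, by rw [hp2]; omega⟩
      obtain ⟨hz1, hz3, hz2⟩ := keylem n hn γ hγ0 hγle p1 p2 p3 hb1 hb2 hb3 he1 he3 ho2 hin
      refine ⟨by omega, ?_, by omega⟩
      rcases hz2 with h'|h'
      · right; omega
      · left; omega
    -- numeric facts (before introducing type abbreviations)
    have hchoose2 : M.choose b + M.choose (b+1) ≤ 4 * Nat.centralBinom b := by
      have hsymm : M.choose (b+1) = M.choose b := by
        rw [hMb]
        have hs := Nat.choose_symm (show b+1 ≤ 2*b+1 by omega)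
        have heq : (2*b+1) - (b+1) = b := by omega
        rw [heq] at hs
        exact hs.symm
      have hco : M.choose b ≤ 2 * Nat.centralBinom b := by
        rw [hMb]; exact choose_odd_le b
      omega
    have hna : n ≤ 6*(a+1) := by omega
    have hnb : n ≤ 6*(b+1) := by omega
    have hneq : n = 2*(a+(a+b))+1 := by omega
    -- counting
    set T1 := {g : Fin A → Bool // (univ.filter fun i => g i = true).card = a} with hT1d
    set T2 := {g : Fin M → Bool // (univ.filter fun j => g j = true).card = b
        ∨ (univ.filter fun j => g j = true).card = b+1} with hT2d
    set cnt := Nat.card {ε : Fin n → Bool //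
        ‖∑ i, (if ε i then (1:ℝ) else -1) • (W (E.symm i))‖ ≤ 1} with hcnt
    have hcard : cnt ≤ Nat.centralBinom a * ((M.choose b + M.choose (b+1)) * Nat.centralBinom a) := by
      have hinj : Function.Injective
          (fun x : {ε : Fin n → Bool // ‖∑ i, (if ε i then (1:ℝ) else -1) • (W (E.symm i))‖ ≤ 1} =>
            ((⟨fun i => x.1 (E (Sum.inl i)), (hmaster x.1 x.2).1⟩ : T1),
             (⟨fun j => x.1 (E (Sum.inr (Sum.inl j))), (hmaster x.1 x.2).2.1⟩ : T2),
             (⟨fun l => x.1 (E (Sum.inr (Sum.inr l))), (hmaster x.1 x.2).2.2⟩ : T1))) := by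
        intro x y hxy
        have h1 := congrArg (fun z => (Subtype.val z.1 : Fin A → Bool)) hxy
        have h2 := congrArg (fun z => (Subtype.val z.2.1 : Fin M → Bool)) hxy
        have h3 := congrArg (fun z => (Subtype.val z.2.2 : Fin A → Bool)) hxy
        dsimp only at h1 h2 h3
        apply Subtype.ext
        funext i
        have hi : i = E (E.symm i) := (E.apply_symm_apply i).symm
        rw [hi]
        rcases E.symm i with z | z | z
        · exact congrFun h1 z
        · exact congrFun h2 z
        · exact congrFun h3 z
      calc cnt ≤ Nat.card (T1 × (T2 × T1)) := Nat.card_le_card_of_injective _ hinj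
        _ = Nat.card T1 * (Nat.card T2 * Nat.card T1) := by
            rw [Nat.card_prod, Nat.card_prod]
        _ ≤ Nat.centralBinom a * ((M.choose b + M.choose (b+1)) * Nat.centralBinom a) := by
            have hTa : Nat.card T1 ≤ Nat.centralBinom a := by
              rw [hT1d]
              refine le_trans (card_cnt_eq_le A a) ?_
              rw [hA, Nat.centralBinom]
            have hTb : Nat.card T2 ≤ M.choose b + M.choose (b+1) := by
              rw [hT2d]; exact card_cnt_or_le M b (b+1)
            exact Nat.mul_le_mul hTa (Nat.mul_le_mul hTb hTa)
    -- numeric chain in ℕ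
    have hcnt2 : cnt ≤ Nat.centralBinom a * ((4 * Nat.centralBinom b) * Nat.centralBinom a) :=
      le_trans hcard (Nat.mul_le_mul_left _ (Nat.mul_le_mul_right _ hchoose2))
    have hnat : cnt^2 * n^3 ≤ 900 * 4^n := by
      have hs1 := cb_sq a
      have hs2 := cb_sq b
      calc cnt^2 * n^3
          ≤ (Nat.centralBinom a * ((4 * Nat.centralBinom b) * Nat.centralBinom a))^2 * n^3 :=
            Nat.mul_le_mul_right _ (Nat.pow_le_pow_left hcnt2 2)
        _ ≤ (Nat.centralBinom a * ((4 * Nat.centralBinom b) * Nat.centralBinom a))^2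
            * (216*((a+1)*(a+1)*(b+1))) := by
            refine Nat.mul_le_mul_left _ ?_
            calc n^3 = n*n*n := by ring
              _ ≤ (6*(a+1))*(6*(a+1))*(6*(b+1)) :=
                  Nat.mul_le_mul (Nat.mul_le_mul hna hna) hnb
              _ = 216*((a+1)*(a+1)*(b+1)) := by ring
        _ = 3456 * ((Nat.centralBinom a^2*(a+1)) * (Nat.centralBinom a^2*(a+1))
            * (Nat.centralBinom b^2*(b+1))) := by ring
        _ ≤ 3456 * (16^a * 16^a * 16^b) :=
            Nat.mul_le_mul_left _ (Nat.mul_le_mul (Nat.mul_le_mul hs1 hs1) hs2)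
        _ ≤ 900 * 4^n := by
            have hpw : 16^a * 16^a * 16^b = 16^(a+(a+b)) := by
              rw [pow_add, pow_add]; ring
            have h4n : (4:ℕ)^n = 4 * 16^(a+(a+b)) := by
              rw [hneq, pow_succ, pow_mul]
              norm_num
              ring
            rw [hpw, h4n]
            nlinarith [pow_pos (show (0:ℕ) < 16 by norm_num) (a+(a+b))]
    -- conversion to the real goal
    show signProb n _ ≤ _
    unfold signProb
    have hcnteq : Nat.card {ε : Fin n → Bool //
        (fun ε' : Fin n → ℝ => ‖∑ i, ε' i • (W (E.symm i))‖ ≤ 1) fun i => if ε i then 1 else -1}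
        = cnt := rfl
    rw [hcnteq]
    have h2pos : (0:ℝ) < 2^n := by positivity
    have hn3nn : (0:ℝ) ≤ (n:ℝ)^3 := by positivity
    have hsqrtpos : (0:ℝ) < Real.sqrt ((n:ℝ)^3) := by
      apply Real.sqrt_pos.mpr; positivity
    have hrpow : ((n:ℝ))^((3:ℝ)/2) = Real.sqrt ((n:ℝ)^3) := by
      rw [show ((3:ℝ)/2) = (3:ℝ)*(1/2) by norm_num]
      rw [Real.rpow_mul (by positivity : (0:ℝ) ≤ (n:ℝ))]
      rw [show ((3:ℝ)) = ((3:ℕ):ℝ) by norm_num, Real.rpow_natCast]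
      rw [Real.sqrt_eq_rpow]
    rw [hrpow]
    rw [div_le_div_iff₀ h2pos hsqrtpos]
    have hcntnn : (0:ℝ) ≤ (cnt:ℝ) := by positivity
    have hlhsnn : (0:ℝ) ≤ (cnt:ℝ) * Real.sqrt ((n:ℝ)^3) := by positivity
    have hrhsnn : (0:ℝ) ≤ (30:ℝ) * 2^n := by positivity
    have hsq2 : ((cnt:ℝ) * Real.sqrt ((n:ℝ)^3))^2 ≤ ((30:ℝ) * 2^n)^2 := by
      have e1 : ((cnt:ℝ) * Real.sqrt ((n:ℝ)^3))^2 = (cnt:ℝ)^2 * (n:ℝ)^3 := by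
        rw [mul_pow, Real.sq_sqrt hn3nn]
      have e2' : ((30:ℝ) * 2^n)^2 = 900 * 4^n := by
        rw [mul_pow, ← pow_mul, show n*2 = 2*n by ring, pow_mul]
        norm_num
      have hcast : (cnt:ℝ)^2 * (n:ℝ)^3 ≤ 900 * 4^n := by exact_mod_cast hnat
      rw [e1, e2']
      exact hcast
    calc (cnt:ℝ) * Real.sqrt ((n:ℝ)^3)
        = Real.sqrt (((cnt:ℝ) * Real.sqrt ((n:ℝ)^3))^2) := (Real.sqrt_sq hlhsnn).symm
      _ ≤ Real.sqrt (((30:ℝ) * 2^n)^2) := Real.sqrt_le_sqrt hsq2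
      _ = (30:ℝ) * 2^n := Real.sqrt_sq hrhsnn
end

section
/- Fix an integer q ≥ 1 and integers x_1, …, x_q. For every ε > 0 there exists n_0 such that for all n ≥ n_0 and all nonnegative integers m_1, …, m_q with m_1 + ⋯ + m_q = n and, for all i, m_i ≥ |x_i| and m_i ≡ x_i (mod 2), we have (1/2^n) · ∏_{i=1}^{q} C(m_i, (m_i + x_i)/2) ≥ (1 − ε) · (2q/(πn))^{q/2}. -/
open Real Filter Nat Topology

lemma stirling_identity (t : ℕ) (ht : 1 ≤ t) :
    (Nat.centralBinom t : ℝ) * Real.sqrt t / 4 ^ t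
      = Stirling.stirlingSeq (2 * t) / (Stirling.stirlingSeq t) ^ 2 := by
  have ht0 : (0:ℝ) < t := by exact_mod_cast ht
  have hst : (0:ℝ) < Real.sqrt t := Real.sqrt_pos.2 ht0
  have hfac : (0:ℝ) < (t ! : ℝ) := by exact_mod_cast t.factorial_pos
  have hexp : (0:ℝ) < Real.exp 1 := Real.exp_pos 1
  have hA : ((2*t)! : ℝ) = (Nat.centralBinom t : ℝ) * ((t ! : ℝ) * (t ! : ℝ)) := by
    have := Nat.choose_mul_factorial_mul_factorial (Nat.le_mul_of_pos_left t (by norm_num : 0 < 2))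
    have h2 : Nat.centralBinom t * t ! * t ! = (2*t)! := by
      rw [Nat.centralBinom_eq_two_mul_choose]
      simpa [Nat.two_mul, Nat.add_sub_cancel] using this
    rw [← h2]; push_cast; ring
  have hs4 : Real.sqrt (2 * (2*t:ℕ) : ℝ) = 2 * Real.sqrt t := by
    push_cast
    rw [show (2:ℝ) * (2 * t) = 4 * t by ring, show (4:ℝ) = 2^2 by norm_num,
      Real.sqrt_mul (by positivity), Real.sqrt_sq (by norm_num)]
  have hs2 : Real.sqrt (2 * (t:ℕ) : ℝ) = Real.sqrt 2 * Real.sqrt t := by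
    push_cast; rw [Real.sqrt_mul (by norm_num)]
  have hE2 : (((2*t:ℕ):ℝ) / Real.exp 1) ^ (2*t) = 4 ^ t * (((t:ℝ) / Real.exp 1) ^ t)^2 := by
    push_cast
    rw [show (2:ℝ)*t/Real.exp 1 = 2 * (t / Real.exp 1) by ring, mul_pow, ← pow_mul,
      show (2:ℝ)^(2*t) = 4^t by rw [pow_mul]; norm_num, mul_comm 2 t]
  rw [Stirling.stirlingSeq, Stirling.stirlingSeq, hA, hs4, hs2, hE2]
  have hpow : (0:ℝ) < ((t:ℝ) / Real.exp 1) ^ t := by positivity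
  have hs2' : (0:ℝ) < Real.sqrt 2 := by positivity
  have hsq2 : Real.sqrt 2 ^ 2 = 2 := Real.sq_sqrt (by norm_num)
  field_simp
  ring_nf
  rw [Real.sq_sqrt (by norm_num : (0:ℝ) ≤ 2)]

lemma centralBinom_limit :
    Tendsto (fun t : ℕ => (Nat.centralBinom t : ℝ) * Real.sqrt t / 4 ^ t) atTop
      (𝓝 (1 / Real.sqrt π)) := by
  have hπ : (0:ℝ) < Real.sqrt π := Real.sqrt_pos.2 Real.pi_pos
  have h1 : Tendsto (fun t : ℕ => Stirling.stirlingSeq (2 * t)) atTop (𝓝 (Real.sqrt π)) :=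
    Stirling.tendsto_stirlingSeq_sqrt_pi.comp (tendsto_atTop_atTop_of_monotone
      (fun a b hab => Nat.mul_le_mul_left 2 hab) (fun b => ⟨b, Nat.le_mul_of_pos_left b two_pos⟩))
  have h2 : Tendsto (fun t : ℕ => (Stirling.stirlingSeq t) ^ 2) atTop (𝓝 (Real.sqrt π ^ 2)) :=
    Stirling.tendsto_stirlingSeq_sqrt_pi.pow 2
  have h3 := h1.div h2 (by positivity)
  have : Real.sqrt π / Real.sqrt π ^ 2 = 1 / Real.sqrt π := by
    rw [sq]; field_simp
  rw [this] at h3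
  apply h3.congr'
  filter_upwards [eventually_ge_atTop 1] with t ht
  exact (stirling_identity t ht).symm

lemma ratio_limit (j : ℕ) :
    Tendsto (fun t : ℕ => (((2*t).choose (t+j) : ℝ)) / ((2*t).choose t : ℝ)) atTop (𝓝 1) := by
  induction j with
  | zero =>
    apply tendsto_const_nhds.congr'
    filter_upwards [eventually_ge_atTop 1] with t ht
    have : ((2*t).choose t : ℝ) ≠ 0 := by
      exact_mod_cast (Nat.centralBinom_eq_two_mul_choose t ▸ Nat.centralBinom_ne_zero t)
    simp [div_self this]
  | succ j ih =>
    have hq : Tendsto (fun t : ℕ => ((t:ℝ) - j) / ((t:ℝ) + j + 1)) atTop (𝓝 1) := by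
      have h1 : Tendsto (fun t : ℕ => 1 - ((j:ℝ)+j+1) / ((t:ℝ) + j + 1)) atTop (𝓝 (1 - 0)) := by
        apply tendsto_const_nhds.sub
        have := (tendsto_const_div_atTop_nhds_zero_nat ((j:ℝ)+j+1)).comp
          (tendsto_add_atTop_nat (j+1))
        apply this.congr
        intro t
        simp only [Function.comp]
        push_cast
        ring_nf
      simp only [sub_zero] at h1
      apply h1.congr'
      filter_upwards [eventually_ge_atTop 1] with t ht
      have hd : ((t:ℝ) + j + 1) ≠ 0 := by positivity
      field_simp
      ring
    have := ih.mul hq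
    rw [one_mul] at this
    apply this.congr'
    filter_upwards [eventually_ge_atTop (j+1)] with t ht
    have key := Nat.choose_succ_right_eq (2*t) (t+j)
    have hsub : 2*t - (t+j) = t - j := by omega
    have hcast : ((2*t - (t+j) : ℕ) : ℝ) = (t:ℝ) - j := by
      rw [hsub]; push_cast [Nat.cast_sub (by omega : j ≤ t)]; ring
    have keyR : ((2*t).choose (t+j+1) : ℝ) * ((t:ℝ)+j+1) = ((2*t).choose (t+j) : ℝ) * ((t:ℝ) - j) := by
      have := congrArg (fun z : ℕ => (z : ℝ)) key
      push_cast at this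
      rw [← hcast]
      push_cast
      linarith [this]
    have hd : ((t:ℝ) + j + 1) ≠ 0 := by positivity
    have : ((2*t).choose (t+(j+1)) : ℝ) = ((2*t).choose (t+j) : ℝ) * ((t:ℝ) - j) / ((t:ℝ)+j+1) := by
      rw [show t+(j+1) = t+j+1 by ring, eq_div_iff hd]
      exact keyR
    rw [this]
    ring

lemma even_limit (j : ℕ) :
    Tendsto (fun t : ℕ => ((2*t).choose (t+j) : ℝ) * Real.sqrt (2*t) / 2 ^ (2*t)) atTop
      (𝓝 (Real.sqrt 2 / Real.sqrt π)) := by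
  have h := ((ratio_limit j).mul centralBinom_limit).mul_const (Real.sqrt 2)
  have heq : (1 * (1 / Real.sqrt π)) * Real.sqrt 2 = Real.sqrt 2 / Real.sqrt π := by ring
  rw [heq] at h
  apply h.congr'
  filter_upwards [eventually_ge_atTop 1] with t ht
  have hC : ((2*t).choose t : ℝ) ≠ 0 := by
    exact_mod_cast (Nat.centralBinom_eq_two_mul_choose t ▸ Nat.centralBinom_ne_zero t)
  have hCB : (Nat.centralBinom t : ℝ) = ((2*t).choose t : ℝ) := by
    rw [Nat.centralBinom_eq_two_mul_choose]
  have hs : Real.sqrt (2*(t:ℝ)) = Real.sqrt 2 * Real.sqrt t := Real.sqrt_mul (by norm_num) _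
  have hp : (2:ℝ) ^ (2*t) = 4 ^ t := by rw [pow_mul]; norm_num
  push_cast
  rw [hCB, hs, hp]
  field_simp

lemma odd_limit (j : ℕ) :
    Tendsto (fun t : ℕ => ((2*t+1).choose (t+1+j) : ℝ) * Real.sqrt (2*t+1) / 2 ^ (2*t+1)) atTop
      (𝓝 (Real.sqrt 2 / Real.sqrt π)) := by
  have h3 : Tendsto (fun t : ℕ => Real.sqrt (2 + 1/(t:ℝ)) / 2) atTop (𝓝 (Real.sqrt 2 / 2)) := by
    have : Tendsto (fun t : ℕ => (2:ℝ) + 1/(t:ℝ)) atTop (𝓝 2) := by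
      have := (tendsto_one_div_atTop_nhds_zero_nat : Tendsto (fun n : ℕ => 1 / (n:ℝ)) atTop (𝓝 0))
      simpa using tendsto_const_nhds.add this
    exact (this.sqrt).div_const 2
  have h := (((ratio_limit j).add (ratio_limit (j+1))).mul centralBinom_limit).mul h3
  have heq : ((1 + 1) * (1 / Real.sqrt π)) * (Real.sqrt 2 / 2) = Real.sqrt 2 / Real.sqrt π := by
    ring
  rw [heq] at h
  apply h.congr'
  filter_upwards [eventually_ge_atTop 1] with t ht
  have ht0 : (0:ℝ) < t := by exact_mod_cast ht
  have hC : ((2*t).choose t : ℝ) ≠ 0 := by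
    exact_mod_cast (Nat.centralBinom_eq_two_mul_choose t ▸ Nat.centralBinom_ne_zero t)
  have hCB : (Nat.centralBinom t : ℝ) = ((2*t).choose t : ℝ) := by
    rw [Nat.centralBinom_eq_two_mul_choose]
  have hsplit : ((2*t+1).choose (t+1+j) : ℝ)
      = ((2*t).choose (t+j) : ℝ) + ((2*t).choose (t+(j+1)) : ℝ) := by
    have : (2*t+1).choose ((t+j)+1) = (2*t).choose (t+j) + (2*t).choose ((t+j)+1) :=
      Nat.choose_succ_succ (2*t) (t+j)
    rw [show t+1+j = (t+j)+1 by ring, this]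
    push_cast
    rw [show t+(j+1) = (t+j)+1 by ring]
  have hsq : Real.sqrt (2*(t:ℝ)+1) = Real.sqrt (2 + 1/(t:ℝ)) * Real.sqrt t := by
    rw [← Real.sqrt_mul (by positivity)]
    congr 1
    field_simp
  have hp : (2:ℝ) ^ (2*t+1) = 4 ^ t * 2 := by rw [pow_succ, pow_mul]; norm_num
  push_cast
  rw [hsplit, hsq, hp, hCB]
  field_simp

lemma choose_decreasing (m : ℕ) : ∀ k k' : ℕ, m ≤ 2*k → k ≤ k' → m.choose k' ≤ m.choose k := by
  have step : ∀ l : ℕ, m ≤ 2*l → m.choose (l+1) ≤ m.choose l := by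
    intro l hl
    have key := Nat.choose_succ_right_eq m l
    have h1 : m.choose (l+1) * (l+1) ≤ m.choose l * (l+1) := by
      rw [key]
      exact Nat.mul_le_mul_left _ (by omega)
    exact Nat.le_of_mul_le_mul_right h1 (by omega)
  intro k k' hk hkk
  induction k', hkk using Nat.le_induction with
  | base => rfl
  | succ l hl ih => exact le_trans (step l (by omega)) ih

lemma key_lemma (D : ℕ) (δ : ℝ) (hδ0 : 0 < δ) (hδ1 : δ < 1) :
    ∃ M : ℕ, 1 ≤ M ∧ ∀ m k : ℕ, M ≤ m → m ≤ 2*k + D → 2*k ≤ m + D →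
      (1-δ) * (Real.sqrt 2 / Real.sqrt π) / Real.sqrt m ≤ (m.choose k : ℝ) / 2^m := by
  set L := Real.sqrt 2 / Real.sqrt π with hL
  have hLpos : 0 < L := by
    apply div_pos (Real.sqrt_pos.2 (by norm_num)) (Real.sqrt_pos.2 Real.pi_pos)
  have hlt : (1-δ) * L < L := by nlinarith
  have he : ∀ᶠ t : ℕ in atTop,
      (1-δ) * L ≤ (Nat.choose (2*t) (t+D) : ℝ) * Real.sqrt (2*(t:ℝ)) / 2 ^ (2*t) :=
    (even_limit D).eventually (eventually_ge_nhds hlt)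
  have ho : ∀ᶠ t : ℕ in atTop,
      (1-δ) * L ≤ (Nat.choose (2*t+1) (t+1+D) : ℝ) * Real.sqrt (2*(t:ℝ)+1) / 2 ^ (2*t+1) :=
    (odd_limit D).eventually (eventually_ge_nhds hlt)
  obtain ⟨T₁, hT₁⟩ := he.exists_forall_of_atTop
  obtain ⟨T₂, hT₂⟩ := ho.exists_forall_of_atTop
  refine ⟨2 * (T₁ + T₂ + D) + 2, by omega, ?_⟩
  intro m k hMm hmk hkm
  have hm1 : 1 ≤ m := by omega
  have hsm : (0:ℝ) < Real.sqrt m := Real.sqrt_pos.2 (by exact_mod_cast (by omega : 0 < m))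
  have hpm : (0:ℝ) < 2^m := by positivity
  -- the case m ≤ 2k
  have main : ∀ k : ℕ, m ≤ 2*k → 2*k ≤ m + D →
      (1-δ) * L / Real.sqrt m ≤ (m.choose k : ℝ) / 2^m := by
    intro k hk1 hk2
    set c := (m+1)/2 with hc
    have hkcD : k ≤ c + D := by omega
    have hmono : (m.choose (c+D) : ℝ) ≤ (m.choose k : ℝ) := by
      exact_mod_cast choose_decreasing m k (c+D) hk1 hkcD
    have hbound : (1-δ) * L ≤ (m.choose (c+D) : ℝ) * Real.sqrt m / 2^m := by
      rcases Nat.even_or_odd m with ⟨t, htm⟩ | ⟨t, htm⟩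
      · have ht : T₁ ≤ t := by omega
        have hce : c = t := by omega
        have h2t : m = 2*t := by omega
        have := hT₁ t ht
        rw [hce, h2t]
        convert this using 3
        push_cast; ring
      · have ht : T₂ ≤ t := by omega
        have hce : c = t + 1 := by omega
        have h2t : m = 2*t+1 := by omega
        have := hT₂ t ht
        rw [hce, h2t]
        convert this using 3
        push_cast; ring
    calc (1-δ) * L / Real.sqrt m
        ≤ ((m.choose (c+D) : ℝ) * Real.sqrt m / 2^m) / Real.sqrt m := by gcongr
      _ = (m.choose (c+D) : ℝ) / 2^m := by field_simp
      _ ≤ (m.choose k : ℝ) / 2^m := by gcongr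
  rcases le_or_gt m (2*k) with h | h
  · exact main k h hkm
  · have hkm' : k ≤ m := by omega
    have hsymm : (m.choose k : ℝ) = (m.choose (m - k) : ℝ) := by
      rw [Nat.choose_symm hkm']
    rw [hsymm]
    exact main (m - k) (by omega) (by omega)

lemma my_sqrt_pow (x : ℝ) (hx : 0 ≤ x) (k : ℕ) : Real.sqrt (x^k) = (Real.sqrt x)^k := by
  induction k with
  | zero => simp
  | succ l ih => rw [pow_succ, Real.sqrt_mul (pow_nonneg hx l), ih, pow_succ]

lemma my_sqrt_prod {ι : Type*} (s : Finset ι) (f : ι → ℝ) (h : ∀ i ∈ s, 0 ≤ f i) :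
    Real.sqrt (∏ i ∈ s, f i) = ∏ i ∈ s, Real.sqrt (f i) := by
  induction s using Finset.cons_induction with
  | empty => simp
  | cons a s ha ih =>
    rw [Finset.prod_cons, Finset.prod_cons, Real.sqrt_mul (h a (Finset.mem_cons_self a s)),
      ih (fun i hi => h i (Finset.mem_cons_of_mem hi))]

lemma my_amgm (q : ℕ) (hq : 1 ≤ q) (f : Fin q → ℝ) (hf : ∀ i, 0 ≤ f i) :
    ∏ i, f i ≤ ((∑ i, f i) / q) ^ q := by
  have hq0 : (0:ℝ) < q := by exact_mod_cast hq
  have hw : ∀ i ∈ Finset.univ, (0:ℝ) ≤ (fun _ : Fin q => 1/(q:ℝ)) i := fun i _ => by positivity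
  have hw1 : ∑ i : Fin q, (1:ℝ)/(q:ℝ) = 1 := by
    rw [Finset.sum_const, Finset.card_univ, Fintype.card_fin, nsmul_eq_mul]
    field_simp
  have hz : ∀ i ∈ Finset.univ, (0:ℝ) ≤ f i := fun i _ => hf i
  have hgm := Real.geom_mean_le_arith_mean_weighted Finset.univ _ f hw hw1 hz
  -- hgm : ∏ i, f i ^ (1/q : ℝ) ≤ ∑ i, (1/q) * f i
  have hsum : ∑ i, (1/(q:ℝ)) * f i = (∑ i, f i) / q := by
    rw [← Finset.mul_sum]; ring
  rw [hsum] at hgm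
  have hLnn : (0:ℝ) ≤ ∏ i, f i ^ (1/(q:ℝ)) :=
    Finset.prod_nonneg (fun i _ => Real.rpow_nonneg (hf i) _)
  have := pow_le_pow_left₀ hLnn hgm q
  calc ∏ i, f i = (∏ i, f i ^ (1/(q:ℝ)))^q := by
        rw [← Finset.prod_pow]
        apply Finset.prod_congr rfl
        intro i _
        rw [← Real.rpow_natCast (f i ^ (1/(q:ℝ))) q, ← Real.rpow_mul (hf i)]
        field_simp
        simp
    _ ≤ ((∑ i, f i) / q) ^ q := this

/-- The binomial coefficient `C(m, z)` with an integer lower index, with the convention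
that it vanishes for `z < 0` (and, via `Nat.choose`, for `z > m`). -/
def zchoose (m : ℕ) (z : ℤ) : ℕ := if 0 ≤ z then m.choose z.toNat else 0

set_option maxHeartbeats 2000000 in
theorem lower_bound_prod_binomial (q : ℕ) (hq : 1 ≤ q) (x : Fin q → ℤ)
    (ε : ℝ) (hε : 0 < ε) :
    ∃ n₀ : ℕ, ∀ n : ℕ, n₀ ≤ n → ∀ m : Fin q → ℕ,
      (∑ i, m i = n) → (∀ i, (x i).natAbs ≤ m i) → (∀ i, (m i : ℤ) % 2 = x i % 2) →
      (1 - ε) * (2 * q / (Real.pi * n)) ^ ((q : ℝ) / 2) ≤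
        (1 / 2 ^ n) * ∏ i, (zchoose (m i) (((m i : ℤ) + x i) / 2) : ℝ) := by
  have hq0 : (0:ℝ) < q := by exact_mod_cast hq
  have hπ0 : (0:ℝ) < π := Real.pi_pos
  set ε' := min ε (1/2) with hε'def
  have hε'0 : 0 < ε' := lt_min hε (by norm_num)
  have hε'le : ε' ≤ 1/2 := min_le_right _ _
  have hε'ε : ε' ≤ ε := min_le_left _ _
  set δ := ε' / q with hδdef
  have hδ0 : 0 < δ := div_pos hε'0 hq0
  have hδhalf : δ ≤ 1/2 := by
    rw [hδdef]
    calc ε' / (q:ℝ) ≤ ε' / 1 := by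
          apply div_le_div_of_nonneg_left (le_of_lt hε'0) one_pos (by exact_mod_cast hq)
      _ = ε' := div_one _
      _ ≤ 1/2 := hε'le
  have hδ1 : δ < 1 := lt_of_le_of_lt hδhalf (by norm_num)
  set D := Finset.univ.sup (fun i => (x i).natAbs) with hDdef
  obtain ⟨M, hM1, hMkey⟩ := key_lemma D δ hδ0 hδ1
  set b := (1-δ) * (Real.sqrt 2 / Real.sqrt π) with hbdef
  have hsπ : 0 < Real.sqrt π := Real.sqrt_pos.2 hπ0
  have hb0 : 0 < b := by
    apply mul_pos (by linarith) (div_pos (Real.sqrt_pos.2 (by norm_num)) hsπ)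
  have hb1 : b ≤ 1 := by
    have h2π : Real.sqrt 2 ≤ Real.sqrt π := Real.sqrt_le_sqrt (by nlinarith [Real.pi_gt_three])
    have : Real.sqrt 2 / Real.sqrt π ≤ 1 := by
      rw [div_le_one hsπ]; exact h2π
    nlinarith
  set c1 := b * (2:ℝ)⁻¹^M with hc1def
  have hc10 : 0 < c1 := by positivity
  set K := (1-ε') * (Real.sqrt (2*q/π))^q / ((2:ℝ)⁻¹^M * c1^(q-1)) with hKdef
  obtain ⟨N, hN⟩ := exists_nat_ge (K^2)
  refine ⟨N + 1, ?_⟩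
  intro n hn m hsum hx hpar
  have hn1 : 1 ≤ n := by omega
  have hn0 : (0:ℝ) < n := by exact_mod_cast hn1
  -- per-index setup
  set k : Fin q → ℕ := fun i => (((m i : ℤ) + x i)/2).toNat with hkdef
  have h2k : ∀ i, 2 * (k i : ℤ) = (m i : ℤ) + x i := by
    intro i
    have h1 := hpar i
    have h2 := hx i
    simp only [hkdef]
    omega
  have hkle : ∀ i, k i ≤ m i := by
    intro i
    have h1 := h2k i
    have h2 := hx i
    omega
  have hDi : ∀ i, (x i).natAbs ≤ D := by
    intro i
    rw [hDdef]
    exact Finset.le_sup (f := fun j => (x j).natAbs) (Finset.mem_univ i)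
  have hcon1 : ∀ i, m i ≤ 2 * k i + D := by
    intro i; have := h2k i; have := hDi i; have := hx i; omega
  have hcon2 : ∀ i, 2 * k i ≤ m i + D := by
    intro i; have := h2k i; have := hDi i; have := hx i; omega
  have hmn : ∀ i, m i ≤ n := by
    intro i
    rw [← hsum]
    exact Finset.single_le_sum (fun j _ => Nat.zero_le (m j)) (Finset.mem_univ i)
  have hzch : ∀ i, (zchoose (m i) (((m i : ℤ) + x i)/2) : ℝ) = ((m i).choose (k i) : ℝ) := by
    intro i
    have hpos : (0:ℤ) ≤ ((m i : ℤ) + x i)/2 := by have := hx i; omega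
    simp only [zchoose, if_pos hpos, hkdef]
  set F : Fin q → ℝ := fun i => ((m i).choose (k i) : ℝ) / 2^(m i) with hFdef
  have hFpos : ∀ i, 0 < F i := by
    intro i
    apply _root_.div_pos _ (by positivity)
    exact_mod_cast Nat.choose_pos (hkle i)
  have hgoalrw : (1/2^n : ℝ) * ∏ i, (zchoose (m i) (((m i : ℤ) + x i)/2) : ℝ) = ∏ i, F i := by
    rw [Finset.prod_congr rfl (fun i _ => hzch i), hFdef]
    rw [Finset.prod_div_distrib]
    have : ∏ i : Fin q, ((2:ℝ))^(m i) = 2^n := by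
      rw [Finset.prod_pow_eq_pow_sum, hsum]
    rw [this]
    ring
  rw [hgoalrw]
  have hPnn : (0:ℝ) ≤ 2*(q:ℝ)/(π*(n:ℝ)) := by positivity
  have hpowrw : (2*(q:ℝ)/(π*(n:ℝ))) ^ ((q:ℝ)/2)
      = (Real.sqrt (2*(q:ℝ)/(π*(n:ℝ))))^q := by
    rw [Real.sqrt_eq_rpow, ← Real.rpow_natCast ((2*(q:ℝ)/(π*(n:ℝ))) ^ (1/(2:ℝ))) q,
      ← Real.rpow_mul hPnn]
    congr 1
    ring
  rw [hpowrw]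
  have hsqnn : (0:ℝ) ≤ (Real.sqrt (2*(q:ℝ)/(π*(n:ℝ))))^q := by positivity
  have hmono : (1-ε) * (Real.sqrt (2*(q:ℝ)/(π*(n:ℝ))))^q
      ≤ (1-ε') * (Real.sqrt (2*(q:ℝ)/(π*(n:ℝ))))^q := by
    apply mul_le_mul_of_nonneg_right (by linarith) hsqnn
  refine le_trans hmono ?_
  have hbern : 1 - ε' ≤ (1-δ)^q := by
    have h := one_add_mul_le_pow (by linarith : (-2:ℝ) ≤ -δ) q
    have : 1 + (q:ℝ) * (-δ) = 1 - ε' := by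
      rw [hδdef]; field_simp; ring
    rw [this] at h
    exact h.trans_eq (by ring)
  have hS1 : 1 ≤ Real.sqrt n := by
    rw [show (1:ℝ) = Real.sqrt 1 by simp]
    exact Real.sqrt_le_sqrt (by exact_mod_cast hn1)
  have hSpos : 0 < Real.sqrt n := by linarith
  by_cases hall : ∀ i, M ≤ m i
  · -- all indices large
    have hm1 : ∀ i, 1 ≤ m i := fun i => le_trans hM1 (hall i)
    have hFi : ∀ i, b / Real.sqrt (m i) ≤ F i := by
      intro i
      exact hMkey (m i) (k i) (hall i) (hcon1 i) (hcon2 i)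
    have hsqmi : ∀ i, (0:ℝ) < Real.sqrt (m i) := by
      intro i
      apply Real.sqrt_pos.2
      exact_mod_cast hm1 i
    have hprodpos : (0:ℝ) < ∏ i, ((m i : ℕ) : ℝ) := by
      apply Finset.prod_pos
      intro i _
      exact_mod_cast hm1 i
    have hsqProd : (0:ℝ) < Real.sqrt (∏ i, ((m i : ℕ):ℝ)) := Real.sqrt_pos.2 hprodpos
    have hamgm : Real.sqrt (∏ i, ((m i:ℕ):ℝ)) ≤ (Real.sqrt ((n:ℝ)/q))^q := by
      rw [← my_sqrt_pow _ (by positivity)]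
      apply Real.sqrt_le_sqrt
      have := my_amgm q hq (fun i => ((m i:ℕ):ℝ)) (fun i => by positivity)
      have hsumcast : ∑ i : Fin q, ((m i:ℕ):ℝ) = (n:ℝ) := by
        exact_mod_cast congrArg (fun z : ℕ => (z:ℝ)) hsum
      rwa [hsumcast] at this
    have hident : (1-δ) * Real.sqrt (2*(q:ℝ)/(π*(n:ℝ))) = b / Real.sqrt ((n:ℝ)/q) := by
      have h1 : Real.sqrt (2*(q:ℝ)/(π*(n:ℝ)))
          = Real.sqrt 2 * Real.sqrt q / (Real.sqrt π * Real.sqrt n) := by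
        rw [show 2*(q:ℝ)/(π*(n:ℝ)) = (2*q)/(π*n) by ring, Real.sqrt_div (by positivity),
          Real.sqrt_mul (by norm_num : (0:ℝ) ≤ 2), Real.sqrt_mul (le_of_lt hπ0)]
      have h2 : Real.sqrt ((n:ℝ)/q) = Real.sqrt n / Real.sqrt q := by
        rw [Real.sqrt_div (by positivity)]
      rw [h1, h2, hbdef]
      have hsq : (0:ℝ) < Real.sqrt q := Real.sqrt_pos.2 hq0
      field_simp
    calc (1-ε') * (Real.sqrt (2*(q:ℝ)/(π*(n:ℝ))))^q
        ≤ (1-δ)^q * (Real.sqrt (2*(q:ℝ)/(π*(n:ℝ))))^q :=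
          mul_le_mul_of_nonneg_right hbern hsqnn
      _ = ((1-δ) * Real.sqrt (2*(q:ℝ)/(π*(n:ℝ))))^q := by rw [mul_pow]
      _ = (b / Real.sqrt ((n:ℝ)/q))^q := by rw [hident]
      _ = b^q / (Real.sqrt ((n:ℝ)/q))^q := by rw [div_pow]
      _ ≤ b^q / Real.sqrt (∏ i, ((m i:ℕ):ℝ)) := by
          apply div_le_div_of_nonneg_left (by positivity) hsqProd hamgm
      _ = ∏ i, (b / Real.sqrt (m i)) := by
          rw [Finset.prod_div_distrib, Finset.prod_const, Finset.card_univ, Fintype.card_fin,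
            my_sqrt_prod _ _ (fun i _ => by positivity)]
      _ ≤ ∏ i, F i := by
          apply Finset.prod_le_prod (fun i _ => by positivity) (fun i _ => hFi i)
  · -- some index is small
    push_neg at hall
    obtain ⟨i₀, hi₀⟩ := hall
    have hFconst : ∀ i, (2:ℝ)⁻¹^(m i) ≤ F i := by
      intro i
      have h1 : (1:ℝ) ≤ ((m i).choose (k i) : ℝ) := by
        exact_mod_cast Nat.choose_pos (hkle i)
      simp only [hFdef]
      rw [inv_pow, inv_le_iff_one_le_mul₀ (by positivity)]
      calc (1:ℝ) ≤ ((m i).choose (k i) : ℝ) := h1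
        _ = ((m i).choose (k i) : ℝ) / 2^(m i) * 2^(m i) := by field_simp
    have hFsmall : (2:ℝ)⁻¹^M ≤ F i₀ := by
      refine le_trans ?_ (hFconst i₀)
      apply pow_le_pow_of_le_one (by norm_num) (by norm_num) (le_of_lt hi₀)
    set a := c1 / Real.sqrt n with hadef
    have ha0 : 0 < a := div_pos hc10 hSpos
    have haF : ∀ i, a ≤ F i := by
      intro i
      by_cases him : M ≤ m i
      · have hsqmi : (0:ℝ) < Real.sqrt (m i) := by
          apply Real.sqrt_pos.2
          have : 1 ≤ m i := le_trans hM1 him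
          exact_mod_cast this
        have h1 : a ≤ b / Real.sqrt (m i) := by
          rw [hadef, hc1def, div_le_div_iff₀ hSpos hsqmi]
          have hsqle : Real.sqrt (m i) ≤ Real.sqrt n := Real.sqrt_le_sqrt (by exact_mod_cast hmn i)
          have hple : (2:ℝ)⁻¹^M ≤ 1 := pow_le_one₀ (by norm_num) (by norm_num)
          nlinarith [mul_pos hb0 hsqmi]
        exact le_trans h1 (hMkey (m i) (k i) him (hcon1 i) (hcon2 i))
      · have h1 : a ≤ (2:ℝ)⁻¹^M := by
          rw [hadef, hc1def, div_le_iff₀ hSpos]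
          nlinarith [pow_pos (show (0:ℝ) < 2⁻¹ by norm_num) M]
        refine le_trans h1 (le_trans ?_ (hFconst i))
        apply pow_le_pow_of_le_one (by norm_num) (by norm_num) (by omega)
    have hprodF : (2:ℝ)⁻¹^M * a^(q-1) ≤ ∏ i, F i := by
      rw [← Finset.mul_prod_erase Finset.univ F (Finset.mem_univ i₀)]
      apply mul_le_mul hFsmall ?_ (by positivity) (le_of_lt (hFpos i₀))
      calc a^(q-1) = ∏ _i ∈ Finset.univ.erase i₀, a := by
            rw [Finset.prod_const, Finset.card_erase_of_mem (Finset.mem_univ i₀),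
              Finset.card_univ, Fintype.card_fin]
        _ ≤ ∏ i ∈ Finset.univ.erase i₀, F i :=
            Finset.prod_le_prod (fun i _ => le_of_lt ha0) (fun i _ => haF i)
    refine le_trans ?_ hprodF
    have hsqsplit : Real.sqrt (2*(q:ℝ)/(π*(n:ℝ))) = Real.sqrt (2*q/π) / Real.sqrt n := by
      rw [show 2*(q:ℝ)/(π*(n:ℝ)) = (2*q/π)/n by rw [div_div], Real.sqrt_div (by positivity)]
    have hK : K ≤ Real.sqrt n := by
      calc K ≤ |K| := le_abs_self K
        _ = Real.sqrt (K^2) := (Real.sqrt_sq_eq_abs K).symm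
        _ ≤ Real.sqrt n := Real.sqrt_le_sqrt (le_trans hN (by exact_mod_cast (by omega : N ≤ n)))
    have hden : (0:ℝ) < (2:ℝ)⁻¹^M * c1^(q-1) := by positivity
    have hkey2 : (1-ε') * (Real.sqrt (2*(q:ℝ)/π))^q ≤ (2:ℝ)⁻¹^M * c1^(q-1) * Real.sqrt n := by
      have h2 := mul_le_mul_of_nonneg_left hK (le_of_lt hden)
      calc (1-ε') * (Real.sqrt (2*(q:ℝ)/π))^q = ((2:ℝ)⁻¹^M * c1^(q-1)) * K := by
            rw [hKdef, mul_div_cancel₀ _ (ne_of_gt hden)]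
        _ ≤ _ := h2
    rw [hsqsplit, div_pow, hadef, div_pow]
    have hSq : Real.sqrt n ^ q = Real.sqrt n ^ (q-1) * Real.sqrt n := by
      rw [← pow_succ]
      congr 1
      omega
    rw [show (1-ε') * ((Real.sqrt (2*(q:ℝ)/π))^q / Real.sqrt n ^ q)
        = ((1-ε') * (Real.sqrt (2*(q:ℝ)/π))^q) / Real.sqrt n ^ q by ring,
      show (2:ℝ)⁻¹^M * (c1^(q-1) / Real.sqrt n ^ (q-1))
        = ((2:ℝ)⁻¹^M * c1^(q-1)) / Real.sqrt n ^ (q-1) by ring]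
    rw [div_le_div_iff₀ (by positivity) (by positivity)]
    have h3 := mul_le_mul_of_nonneg_right hkey2 (pow_nonneg (Real.sqrt_nonneg (n:ℝ)) (q-1))
    calc (1-ε') * (Real.sqrt (2*(q:ℝ)/π))^q * Real.sqrt n ^ (q-1)
        ≤ ((2:ℝ)⁻¹^M * c1^(q-1) * Real.sqrt n) * Real.sqrt n ^ (q-1) := h3
      _ = ((2:ℝ)⁻¹^M * c1^(q-1)) * Real.sqrt n ^ q := by rw [hSq]; ring
end

section
/- Let k be a positive integer and let v_1, …, v_{2k+1} be unit vectors in ℝ² given in standard form, i.e., v_i = (cos θ_i, sin θ_i) with 0 ≤ θ_1 ≤ θ_2 ≤ ⋯ ≤ θ_{2k+1} < π. Then there exists a pairing 𝒫 of {1, …, 2k+1} with |𝒫| = k such that ∑_{{i,j} ∈ 𝒫} |θ_i − θ_j| ≤ π/2 and ∑_{{i,j} ∈ 𝒫} ‖v_i − v_j‖₂² ≤ 2. -/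
lemma telescope_pairing (f : ℕ → ℝ) (n : ℕ) :
    (∑ i ∈ Finset.range n, (f (2*i+0+1) - f (2*i+0))) +
    (∑ i ∈ Finset.range n, (f (2*i+1+1) - f (2*i+1))) = f (2*n) - f 0 := by
  induction n with
  | zero => simp
  | succ n ih =>
    rw [Finset.sum_range_succ, Finset.sum_range_succ]
    have : 2*(n+1) = 2*n+1+1 := by ring
    rw [this]
    simp only [Nat.add_zero] at *
    linarith

lemma cos_bound_pairing {x : ℝ} (h0 : 0 ≤ x) (h1 : x ≤ Real.pi/2) :
    2 - 2 * Real.cos x ≤ 4 / Real.pi * x := by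
  have hπ := Real.pi_pos
  have h := Real.one_sub_mul_le_cos h0 h1
  have h2 : 2 / Real.pi * x * 2 = 4 / Real.pi * x := by ring
  nlinarith

/-- A pairing of the index set `Fin m`: a finite collection of ordered pairs `(i, j)`
with `i < j`, representing pairwise disjoint two-element subsets of `Fin m`. -/
def IsPairing {m : ℕ} (P : Finset (Fin m × Fin m)) : Prop :=
  (∀ p ∈ P, p.1 < p.2) ∧
    ∀ p ∈ P, ∀ q ∈ P, p ≠ q →
      p.1 ≠ q.1 ∧ p.1 ≠ q.2 ∧ p.2 ≠ q.1 ∧ p.2 ≠ q.2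

theorem optimal_pairing (k : ℕ) (hk : 0 < k) (θ : Fin (2 * k + 1) → ℝ)
    (hrange : ∀ i, 0 ≤ θ i ∧ θ i < Real.pi) (hmono : Monotone θ)
    (v : Fin (2 * k + 1) → EuclideanSpace ℝ (Fin 2))
    (hv : ∀ i, v i 0 = Real.cos (θ i) ∧ v i 1 = Real.sin (θ i)) :
    ∃ P : Finset (Fin (2 * k + 1) × Fin (2 * k + 1)), IsPairing P ∧ P.card = k ∧
      (∑ p ∈ P, |θ p.1 - θ p.2|) ≤ Real.pi / 2 ∧
      (∑ p ∈ P, ‖v p.1 - v p.2‖ ^ 2) ≤ 2 := by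
  have hπ := Real.pi_pos
  -- the squared distance between unit vectors in terms of the angle difference
  have hnorm : ∀ a b : Fin (2*k+1), ‖v a - v b‖^2 = 2 - 2 * Real.cos (θ b - θ a) := by
    intro a b
    have h1 : ‖v a - v b‖^2 = ∑ j : Fin 2, ((v a - v b) j)^2 := by
      rw [EuclideanSpace.norm_eq, Real.sq_sqrt (by positivity)]
      simp [sq_abs]
    rw [h1, Fin.sum_univ_two]
    have e0 : (v a - v b) 0 = v a 0 - v b 0 := rfl
    have e1 : (v a - v b) 1 = v a 1 - v b 1 := rfl
    rw [e0, e1, (hv a).1, (hv a).2, (hv b).1, (hv b).2, Real.cos_sub]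
    nlinarith [Real.sin_sq_add_cos_sq (θ a), Real.sin_sq_add_cos_sq (θ b)]
  let idx : ℕ → Fin (2*k+1) := fun n => ⟨min n (2*k), by omega⟩
  have hidx : ∀ n, n ≤ 2*k → (idx n : ℕ) = n := fun n h => by
    simp [idx, min_eq_left h]
  set f : ℕ → ℝ := fun n => θ (idx n) with hf
  have hfmono : ∀ a b : ℕ, a ≤ b → f a ≤ f b := by
    intro a b h
    exact hmono (by simp only [idx, Fin.mk_le_mk]; omega)
  set S : ℕ → ℝ := fun o => ∑ i ∈ Finset.range k, (f (2*i+o+1) - f (2*i+o)) with hS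
  have hSnonneg : ∀ o, 0 ≤ S o := fun o =>
    Finset.sum_nonneg fun i _ => by linarith [hfmono (2*i+o) (2*i+o+1) (by omega)]
  have hsum : S 0 + S 1 = f (2*k) - f 0 := telescope_pairing f k
  have hlt : f (2*k) - f 0 < Real.pi := by
    have := (hrange (idx (2*k))).2
    have := (hrange (idx 0)).1
    simp only [hf]; linarith
  have key : ∀ o, o ≤ 1 → S o ≤ Real.pi/2 →
      ∃ P : Finset (Fin (2 * k + 1) × Fin (2 * k + 1)), IsPairing P ∧ P.card = k ∧
      (∑ p ∈ P, |θ p.1 - θ p.2|) ≤ Real.pi / 2 ∧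
      (∑ p ∈ P, ‖v p.1 - v p.2‖ ^ 2) ≤ 2 := by
    intro o ho hSo
    have hb : ∀ i, i < k → 2*i+o+1 ≤ 2*k := by omega
    set pr : ℕ → Fin (2*k+1) × Fin (2*k+1) := fun i => (idx (2*i+o), idx (2*i+o+1)) with hpr
    have hval1 : ∀ i, i < k → ((pr i).1 : ℕ) = 2*i+o := fun i hi => hidx _ (by omega)
    have hval2 : ∀ i, i < k → ((pr i).2 : ℕ) = 2*i+o+1 := fun i hi => hidx _ (hb i hi)
    have hinj : ∀ x ∈ Finset.range k, ∀ y ∈ Finset.range k, pr x = pr y → x = y := by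
      intro x hx y hy h
      have h1 : ((pr x).1 : ℕ) = ((pr y).1 : ℕ) := by rw [h]
      rw [hval1 x (Finset.mem_range.1 hx), hval1 y (Finset.mem_range.1 hy)] at h1
      omega
    refine ⟨(Finset.range k).image pr, ⟨?_, ?_⟩, ?_, ?_, ?_⟩
    · intro p hp
      obtain ⟨i, hi, rfl⟩ := Finset.mem_image.1 hp
      have hi := Finset.mem_range.1 hi
      rw [Fin.lt_def, hval1 i hi, hval2 i hi]; omega
    · intro p hp q hq hpq
      obtain ⟨i, hi, rfl⟩ := Finset.mem_image.1 hp
      obtain ⟨j, hj, rfl⟩ := Finset.mem_image.1 hq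
      have hi := Finset.mem_range.1 hi
      have hj := Finset.mem_range.1 hj
      have hij : i ≠ j := fun h => hpq (by rw [h])
      refine ⟨?_, ?_, ?_, ?_⟩ <;>
        (intro h; have h2 := congrArg Fin.val h) <;>
        first
        | (rw [hval1 i hi, hval1 j hj] at h2; omega)
        | (rw [hval1 i hi, hval2 j hj] at h2; omega)
        | (rw [hval2 i hi, hval1 j hj] at h2; omega)
        | (rw [hval2 i hi, hval2 j hj] at h2; omega)
    · rw [Finset.card_image_of_injOn hinj, Finset.card_range]
    · rw [Finset.sum_image hinj]
      calc ∑ i ∈ Finset.range k, |θ (pr i).1 - θ (pr i).2|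
          = S o := by
            apply Finset.sum_congr rfl
            intro i hi
            rw [abs_sub_comm, abs_of_nonneg (by linarith [hfmono (2*i+o) (2*i+o+1) (by omega)])]
        _ ≤ Real.pi/2 := hSo
    · rw [Finset.sum_image hinj]
      have hterm : ∀ i ∈ Finset.range k,
          ‖v (pr i).1 - v (pr i).2‖^2 ≤ 4/Real.pi * (f (2*i+o+1) - f (2*i+o)) := by
        intro i hi
        rw [hnorm]
        have hd0 : 0 ≤ f (2*i+o+1) - f (2*i+o) := by
          linarith [hfmono (2*i+o) (2*i+o+1) (by omega)]
        have hd1 : f (2*i+o+1) - f (2*i+o) ≤ Real.pi/2 := by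
          have h3 := Finset.single_le_sum (f := fun j => f (2*j+o+1) - f (2*j+o))
            (fun j _ => sub_nonneg.2 (hfmono (2*j+o) (2*j+o+1) (by omega))) hi
          have h4 : (∑ j ∈ Finset.range k, (f (2*j+o+1) - f (2*j+o))) ≤ Real.pi/2 := hSo
          linarith
        exact cos_bound_pairing hd0 hd1
      calc ∑ i ∈ Finset.range k, ‖v (pr i).1 - v (pr i).2‖^2
          ≤ ∑ i ∈ Finset.range k, 4/Real.pi * (f (2*i+o+1) - f (2*i+o)) :=
            Finset.sum_le_sum hterm
        _ = 4/Real.pi * S o := by rw [Finset.mul_sum]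
        _ ≤ 4/Real.pi * (Real.pi/2) := by
            apply mul_le_mul_of_nonneg_left hSo (by positivity)
        _ = 2 := by field_simp; norm_num
  by_cases h : S 0 ≤ Real.pi/2
  · exact key 0 (by omega) h
  · exact key 1 (by omega) (by linarith)
end

section
/- Let Δ > 0 and let φ : [0, Δ] → ℝ be a convex, increasing function with φ(0) = 0. If x_1, …, x_k ∈ [0, Δ] are real numbers with x_1 + ⋯ + x_k ≤ S, then φ(x_1) + ⋯ + φ(x_k) ≤ (⌊S/Δ⌋ + 1) · φ(Δ). -/
theorem convex_sum_bound (Δ : ℝ) (hΔ : 0 < Δ) (φ : ℝ → ℝ)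
    (hconv : ConvexOn ℝ (Set.Icc 0 Δ) φ)
    (hmono : MonotoneOn φ (Set.Icc 0 Δ))
    (hφ0 : φ 0 = 0)
    (k : ℕ) (x : Fin k → ℝ) (hx : ∀ i, x i ∈ Set.Icc 0 Δ)
    (S : ℝ) (hS : 0 ≤ S) (hsum : ∑ i, x i ≤ S) :
    ∑ i, φ (x i) ≤ ((⌊S / Δ⌋ : ℝ) + 1) * φ Δ := by
  have hφΔ : 0 ≤ φ Δ := by
    have := hmono (Set.mem_Icc.mpr ⟨le_refl 0, hΔ.le⟩)
      (Set.mem_Icc.mpr ⟨hΔ.le, le_refl Δ⟩) hΔ.le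
    linarith
  have key : ∀ i, φ (x i) ≤ (x i / Δ) * φ Δ := by
    intro i
    obtain ⟨h0, h1⟩ := Set.mem_Icc.mp (hx i)
    have ht0 : 0 ≤ x i / Δ := div_nonneg h0 hΔ.le
    have ht1 : x i / Δ ≤ 1 := (div_le_one hΔ).mpr h1
    have := hconv.2 (Set.mem_Icc.mpr ⟨le_refl 0, hΔ.le⟩)
      (Set.mem_Icc.mpr ⟨hΔ.le, le_refl Δ⟩)
      (by linarith : (0:ℝ) ≤ 1 - x i / Δ) ht0 (by ring)
    have heq : (1 - x i / Δ) • (0:ℝ) + (x i / Δ) • Δ = x i := by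
      simp only [smul_eq_mul, mul_zero, zero_add]
      field_simp [hΔ.ne']
    rw [heq] at this
    simpa [hφ0, smul_eq_mul] using this
  calc ∑ i, φ (x i) ≤ ∑ i, (x i / Δ) * φ Δ := Finset.sum_le_sum fun i _ => key i
    _ = (∑ i, x i) / Δ * φ Δ := by rw [← Finset.sum_mul, ← Finset.sum_div]
    _ ≤ S / Δ * φ Δ := by
        apply mul_le_mul_of_nonneg_right _ hφΔ
        exact div_le_div_of_nonneg_right hsum hΔ.le |>.trans_eq rfl
    _ ≤ ((⌊S / Δ⌋ : ℝ) + 1) * φ Δ :=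
        mul_le_mul_of_nonneg_right (Int.lt_floor_add_one _).le hφΔ
end

section
/- Let v_1, …, v_{2k+1} be unit vectors in ℝ² in standard form, i.e., v_i = (cos θ_i, sin θ_i) with 0 ≤ θ_1 ≤ ⋯ ≤ θ_{2k+1} < π, and let 𝒫 be a pairing of {1, …, 2k+1}. Let β be a real number with 0 < β ≤ 2. If ∑_{{i,j} ∈ 𝒫} |θ_i − θ_j| ≤ π/2 and ∑_{{i,j} ∈ 𝒫} ‖v_i − v_j‖₂² ≥ β, then there exists a pair {i, j} ∈ 𝒫 with ‖v_i − v_j‖₂² ≥ β²/10. -/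
theorem strong_pair_exists (k : ℕ) (hk : 0 < k) (θ : Fin (2 * k + 1) → ℝ)
    (hrange : ∀ i, 0 ≤ θ i ∧ θ i < Real.pi) (hmono : Monotone θ)
    (v : Fin (2 * k + 1) → EuclideanSpace ℝ (Fin 2))
    (hv : ∀ i, v i 0 = Real.cos (θ i) ∧ v i 1 = Real.sin (θ i))
    (P : Finset (Fin (2 * k + 1) × Fin (2 * k + 1))) (hP : IsPairing P)
    (β : ℝ) (hβ0 : 0 < β) (hβ2 : β ≤ 2)
    (hE1 : (∑ p ∈ P, |θ p.1 - θ p.2|) ≤ Real.pi / 2)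
    (hE2 : β ≤ ∑ p ∈ P, ‖v p.1 - v p.2‖ ^ 2) :
    ∃ p ∈ P, β ^ 2 / 10 ≤ ‖v p.1 - v p.2‖ ^ 2 := by
  have hπ := Real.pi_pos
  have hδ0 : ∀ p ∈ P, 0 ≤ θ p.2 - θ p.1 := fun p hp =>
    sub_nonneg.2 (hmono (hP.1 p hp).le)
  have habs : ∀ p ∈ P, |θ p.1 - θ p.2| = θ p.2 - θ p.1 := by
    intro p hp
    rw [abs_sub_comm, abs_of_nonneg (hδ0 p hp)]
  have hE1' : (∑ p ∈ P, (θ p.2 - θ p.1)) ≤ Real.pi / 2 := by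
    rw [← Finset.sum_congr rfl habs]; exact hE1
  have hnorm : ∀ p ∈ P, ‖v p.1 - v p.2‖ ^ 2
      = 4 * Real.sin ((θ p.2 - θ p.1) / 2) ^ 2 := by
    intro p hp
    have h1 := hv p.1; have h2 := hv p.2
    have key : ‖v p.1 - v p.2‖ ^ 2 = ∑ i, ‖(v p.1 - v p.2) i‖ ^ 2 := by
      rw [EuclideanSpace.norm_eq, Real.sq_sqrt (by positivity)]
    rw [key, Fin.sum_univ_two]
    simp only [PiLp.sub_apply, h1.1, h1.2, h2.1, h2.2, Real.norm_eq_abs, sq_abs]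
    have hs : Real.sin ((θ p.2 - θ p.1) / 2) ^ 2
        = 1 / 2 - Real.cos (2 * ((θ p.2 - θ p.1) / 2)) / 2 :=
      Real.sin_sq_eq_half_sub _
    have h2d : 2 * ((θ p.2 - θ p.1) / 2) = θ p.2 - θ p.1 := by ring
    rw [hs, h2d, Real.cos_sub]
    nlinarith [Real.sin_sq_add_cos_sq (θ p.1), Real.sin_sq_add_cos_sq (θ p.2)]
  have hne : P.Nonempty := by
    rcases P.eq_empty_or_nonempty with h | h
    · rw [h] at hE2; simp at hE2; linarith
    · exact h
  obtain ⟨p₀, hp₀, hmax⟩ := P.exists_max_image (fun p => θ p.2 - θ p.1) hne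

  have hδmax0 : 0 ≤ θ p₀.2 - θ p₀.1 := hδ0 p₀ hp₀
  have hδmaxπ : θ p₀.2 - θ p₀.1 ≤ Real.pi / 2 :=
    le_trans (Finset.single_le_sum (fun p hp => hδ0 p hp) hp₀) hE1'
  have hub : ∀ p ∈ P, ‖v p.1 - v p.2‖ ^ 2 ≤ (θ p₀.2 - θ p₀.1) * (θ p.2 - θ p.1) := by
    intro p hp
    rw [hnorm p hp]
    have hd := hδ0 p hp
    have h0 : (0:ℝ) ≤ (θ p.2 - θ p.1) / 2 := by linarith
    have hsq : Real.sin ((θ p.2 - θ p.1) / 2) ^ 2 ≤ ((θ p.2 - θ p.1) / 2) ^ 2 :=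
      Real.sin_sq_le_sq
    have hm := hmax p hp
    nlinarith
  have hchain : β ≤ (θ p₀.2 - θ p₀.1) * (Real.pi / 2) := by
    calc β ≤ ∑ p ∈ P, ‖v p.1 - v p.2‖ ^ 2 := hE2
    _ ≤ ∑ p ∈ P, (θ p₀.2 - θ p₀.1) * (θ p.2 - θ p.1) := Finset.sum_le_sum hub
    _ = (θ p₀.2 - θ p₀.1) * ∑ p ∈ P, (θ p.2 - θ p.1) := by rw [Finset.mul_sum]
    _ ≤ (θ p₀.2 - θ p₀.1) * (Real.pi / 2) :=
        mul_le_mul_of_nonneg_left hE1' hδmax0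
  have hδlb : 2 * β / Real.pi ≤ θ p₀.2 - θ p₀.1 := by
    rw [div_le_iff₀ hπ]; linarith
  have hJ : 2 / Real.pi * ((θ p₀.2 - θ p₀.1) / 2) ≤ Real.sin ((θ p₀.2 - θ p₀.1) / 2) :=
    Real.mul_le_sin (by linarith) (by linarith)
  have hsin0 : 0 ≤ Real.sin ((θ p₀.2 - θ p₀.1) / 2) := le_trans (by positivity) hJ
  refine ⟨p₀, hp₀, ?_⟩
  rw [hnorm p₀ hp₀]
  have hJ2 : ((θ p₀.2 - θ p₀.1) / Real.pi) ^ 2 ≤ Real.sin ((θ p₀.2 - θ p₀.1) / 2) ^ 2 := by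
    have h1 : (θ p₀.2 - θ p₀.1) / Real.pi = 2 / Real.pi * ((θ p₀.2 - θ p₀.1) / 2) := by
      field_simp
    rw [h1]
    exact pow_le_pow_left₀ (by positivity) hJ 2
  have hpi : Real.pi < 3.15 := Real.pi_lt_d2
  have hδsq : (2 * β / Real.pi) ^ 2 ≤ ((θ p₀.2 - θ p₀.1)) ^ 2 :=
    pow_le_pow_left₀ (by positivity) hδlb 2
  have hpi2 : Real.pi ^ 2 ≤ 9.9225 := by nlinarith
  have hπ4 : Real.pi ^ 2 * Real.pi ^ 2 ≤ 160 := by nlinarith [sq_nonneg Real.pi]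
  have key : β ^ 2 / 10 ≤ 4 * ((2 * β / Real.pi) ^ 2 / Real.pi ^ 2) := by
    have h1 : 4 * ((2 * β / Real.pi) ^ 2 / Real.pi ^ 2)
        = 16 * β ^ 2 / (Real.pi ^ 2 * Real.pi ^ 2) := by
      field_simp; ring
    rw [h1, div_le_div_iff₀ (by norm_num) (by positivity)]
    have := mul_le_mul_of_nonneg_left hπ4 (sq_nonneg β)
    linarith
  refine le_trans key ?_
  have h2 : (2 * β / Real.pi) ^ 2 / Real.pi ^ 2 ≤ ((θ p₀.2 - θ p₀.1) / Real.pi) ^ 2 := by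
    rw [div_pow (θ p₀.2 - θ p₀.1)]
    exact div_le_div_of_nonneg_right hδsq (by positivity) |>.trans_eq rfl
  linarith [hJ2]
end

section
/- For every positive integer k, every family of unit vectors v_1, …, v_{2k+1} in ℝ² in standard form (i.e., v_i = (cos θ_i, sin θ_i) with 0 ≤ θ_1 ≤ ⋯ ≤ θ_{2k+1} < π), and every real δ > 0, there exists a pairing 𝒫 of {1, …, 2k+1} such that ∑_{{i,j} ∈ 𝒫} ‖v_i − v_j‖₂² ≤ δ and |𝒫| ≥ k − ⌊10/δ⌋. -/
theorem delta_pairing (k : ℕ) (hk : 0 < k) (θ : Fin (2 * k + 1) → ℝ)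
    (hrange : ∀ i, 0 ≤ θ i ∧ θ i < Real.pi) (hmono : Monotone θ)
    (v : Fin (2 * k + 1) → EuclideanSpace ℝ (Fin 2))
    (hv : ∀ i, v i 0 = Real.cos (θ i) ∧ v i 1 = Real.sin (θ i))
    (δ : ℝ) (hδ : 0 < δ) :
    ∃ P : Finset (Fin (2 * k + 1) × Fin (2 * k + 1)), IsPairing P ∧
      (∑ p ∈ P, ‖v p.1 - v p.2‖ ^ 2) ≤ δ ∧
      (k : ℤ) - ⌊(10 : ℝ) / δ⌋ ≤ (P.card : ℤ) := by
  have hπ : 0 < Real.pi := Real.pi_pos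
  set a : Fin k → Fin (2 * k + 1) := fun i => ⟨2 * i, by omega⟩ with ha
  set b : Fin k → Fin (2 * k + 1) := fun i => ⟨2 * i + 1, by omega⟩ with hb
  set g : Fin k → ℝ := fun i => θ (b i) - θ (a i) with hg
  have hgnn : ∀ i, 0 ≤ g i := by
    intro i
    have := hmono (show a i ≤ b i by simp [ha, hb, Fin.le_def])
    simp [hg]; linarith
  set c : ℝ := δ / Real.pi with hc
  have hcpos : 0 < c := div_pos hδ hπ
  set K : Finset (Fin k) := Finset.univ.filter (fun i => g i ≤ c) with hK
  set D : Finset (Fin k) := Finset.univ.filter (fun i => ¬ (g i ≤ c)) with hD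
  set f : Fin k → Fin (2 * k + 1) × Fin (2 * k + 1) := fun i => (a i, b i) with hf
  have hinj : Function.Injective f := by
    intro i j hij
    have := congrArg (fun p => (p.1 : ℕ)) hij
    simp only [hf, ha] at this
    exact Fin.ext (by omega)
  -- telescoping bound on total gap
  have htel : ∑ i : Fin k, g i ≤ Real.pi := by
    set F : ℕ → ℝ := fun n => θ ⟨min (2 * n) (2 * k), by omega⟩ with hF
    have hstep : ∀ i : Fin k, g i ≤ F (i + 1) - F i := by
      intro i
      have hi := i.isLt
      have h1 : F i = θ (a i) := by
        simp only [hF, ha]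
        congr 1
        exact Fin.ext (by simp only; omega)
      have h2 : θ (b i) ≤ F (i + 1) := by
        apply hmono
        simp [Fin.le_def, hb, hF]
      simp only [hg]; linarith
    calc ∑ i : Fin k, g i ≤ ∑ i : Fin k, (F (i + 1) - F i) :=
          Finset.sum_le_sum (fun i _ => hstep i)
      _ = ∑ i ∈ Finset.range k, (F (i + 1) - F i) :=
          Fin.sum_univ_eq_sum_range (fun n => F (n + 1) - F n) k
      _ = F k - F 0 := Finset.sum_range_sub F k
      _ ≤ Real.pi := by
          have h1 := (hrange ⟨min (2 * k) (2 * k), by omega⟩).2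
          have h2 := (hrange ⟨min 0 (2 * k), by omega⟩).1
          simp only [hF]; linarith
  refine ⟨K.image f, ?_, ?_, ?_⟩
  · constructor
    · intro p hp
      obtain ⟨i, _, rfl⟩ := Finset.mem_image.mp hp
      simp [hf, ha, hb, Fin.lt_def]
    · intro p hp q hq hpq
      obtain ⟨i, _, rfl⟩ := Finset.mem_image.mp hp
      obtain ⟨j, _, rfl⟩ := Finset.mem_image.mp hq
      have hij : i ≠ j := fun h => hpq (by rw [h])
      have hij' : (i : ℕ) ≠ (j : ℕ) := fun h => hij (Fin.ext h)
      refine ⟨?_, ?_, ?_, ?_⟩ <;> simp [hf, ha, hb, Fin.ext_iff] <;> omega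
  · -- sum bound
    rw [Finset.sum_image (fun x _ y _ h => hinj h)]
    have hnorm : ∀ i : Fin k, ‖v (a i) - v (b i)‖ ^ 2 ≤ g i ^ 2 := by
      intro i
      have hexp : ‖v (a i) - v (b i)‖ ^ 2 =
          (v (a i) 0 - v (b i) 0) ^ 2 + (v (a i) 1 - v (b i) 1) ^ 2 := by
        rw [EuclideanSpace.norm_eq, Real.sq_sqrt (by positivity)]
        simp [Fin.sum_univ_two, sq_abs]
      rw [hexp, (hv (a i)).1, (hv (a i)).2, (hv (b i)).1, (hv (b i)).2]
      set A := θ (a i); set B := θ (b i)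
      have hcos : 1 - (B - A) ^ 2 / 2 ≤ Real.cos (B - A) :=
        Real.one_sub_sq_div_two_le_cos
      have hexp2 : (Real.cos A - Real.cos B) ^ 2 + (Real.sin A - Real.sin B) ^ 2
          = 2 - 2 * Real.cos (B - A) := by
        rw [Real.cos_sub]
        nlinarith [Real.sin_sq_add_cos_sq A, Real.sin_sq_add_cos_sq B]
      rw [hexp2]
      simp only [hg]
      nlinarith
    calc ∑ i ∈ K, ‖v (a i) - v (b i)‖ ^ 2
        ≤ ∑ i ∈ K, c * g i := by
          apply Finset.sum_le_sum
          intro i hi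
          have hic : g i ≤ c := (Finset.mem_filter.mp hi).2
          have := hnorm i
          nlinarith [hgnn i]
      _ ≤ ∑ i : Fin k, c * g i := by
          apply Finset.sum_le_sum_of_subset_of_nonneg (Finset.filter_subset _ _)
          intro i _ _
          exact mul_nonneg hcpos.le (hgnn i)
      _ = c * ∑ i : Fin k, g i := by rw [Finset.mul_sum]
      _ ≤ c * Real.pi := by
          apply mul_le_mul_of_nonneg_left htel hcpos.le
      _ = δ := by rw [hc]; field_simp
  · -- cardinality bound
    rw [Finset.card_image_of_injective _ hinj]
    have hsplit : K.card + D.card = k := by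
      have := Finset.card_filter_add_card_filter_not
        (s := (Finset.univ : Finset (Fin k))) (p := fun i => g i ≤ c)
      simpa [hK, hD] using this
    have hDbound : (D.card : ℤ) ≤ ⌊(10 : ℝ) / δ⌋ := by
      rw [Int.le_floor]
      have h1 : D.card • c ≤ ∑ i ∈ D, g i := by
        apply Finset.card_nsmul_le_sum
        intro i hi
        exact le_of_not_ge (Finset.mem_filter.mp hi).2
      have h2 : ∑ i ∈ D, g i ≤ ∑ i : Fin k, g i :=
        Finset.sum_le_sum_of_subset_of_nonneg (Finset.filter_subset _ _)
          (fun i _ _ => hgnn i)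
      have hcd : (D.card : ℝ) * c ≤ Real.pi := by
        have := h1.trans (h2.trans htel)
        simpa [nsmul_eq_mul] using this
      have hpi2 : Real.pi ^ 2 ≤ 10 := by nlinarith [Real.pi_lt_d2, Real.pi_pos]
      have h3 : (D.card : ℝ) * δ ≤ Real.pi ^ 2 := by
        have h := mul_le_mul_of_nonneg_right hcd hπ.le
        calc (D.card : ℝ) * δ = (D.card : ℝ) * c * Real.pi := by
              rw [hc]; field_simp
          _ ≤ Real.pi * Real.pi := h
          _ = Real.pi ^ 2 := (sq Real.pi).symm
      rw [le_div_iff₀ hδ]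
      push_cast
      linarith
    have hk' : (K.card : ℤ) + (D.card : ℤ) = k := by exact_mod_cast hsplit
    omega
end

section
/- For every integer d ≥ 1, both f_0(d) and f_1(d) satisfy (15/2^7)·2^d ≤ f_0(d) ≤ 2^d and (15/2^7)·2^d ≤ f_1(d) ≤ 2^d. -/
open Finset

def Sfin (n m : ℕ) : Finset (Fin n → ℤ) :=
  (Fintype.piFinset fun _ => ({0, 2, -2} : Finset ℤ)).filter
    fun p => (univ.filter fun i => p i ≠ 0).card ≤ m

lemma card_Sfin (n m : ℕ) :
    (Sfin n m).card = ∑ j ∈ range (m+1), n.choose j * 2^j := by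
  have h1 : (Sfin n m).card =
      ∑ t ∈ (univ : Finset (Fin n)).powerset.filter (fun t => t.card ≤ m),
        ((Sfin n m).filter fun p => (univ.filter fun i => p i ≠ 0) = t).card := by
    apply card_eq_sum_card_fiberwise
    intro p hp
    simp only [mem_coe, mem_filter, mem_powerset]
    exact ⟨subset_univ _, (mem_filter.mp hp).2⟩
  rw [h1]
  have h2 : ∀ t ∈ (univ : Finset (Fin n)).powerset.filter (fun t => t.card ≤ m),
      ((Sfin n m).filter fun p => (univ.filter fun i => p i ≠ 0) = t).card = 2 ^ t.card := by
    intro t ht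
    have htm : t.card ≤ m := (mem_filter.mp ht).2
    have : ((Sfin n m).filter fun p => (univ.filter fun i => p i ≠ 0) = t) =
        Fintype.piFinset (fun i => if i ∈ t then ({2, -2} : Finset ℤ) else {0}) := by
      ext p
      simp only [mem_filter, Sfin, Fintype.mem_piFinset, mem_insert, mem_singleton]
      constructor
      · rintro ⟨⟨hmem, -⟩, hsupp⟩
        intro i
        by_cases hi : i ∈ t
        · simp only [hi, if_true, mem_insert, mem_singleton]
          have : p i ≠ 0 := by
            have := hsupp ▸ hi
            exact (mem_filter.mp this).2
          rcases hmem i with h | h | h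
          · exact absurd h this
          · exact Or.inl h
          · exact Or.inr h
        · simp only [hi, if_false, mem_singleton]
          by_contra hne
          exact hi (hsupp ▸ mem_filter.mpr ⟨mem_univ i, hne⟩)
      · intro hmem
        have hsupp : (univ.filter fun i => p i ≠ 0) = t := by
          ext i
          simp only [mem_filter, mem_univ, true_and]
          constructor
          · intro hne
            by_contra hi
            have := hmem i
            simp [hi] at this
            exact hne this
          · intro hi
            have := hmem i
            simp only [hi, if_true, mem_insert, mem_singleton] at this
            rcases this with h | h <;> simp [h]
        refine ⟨⟨?_, ?_⟩, hsupp⟩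
        · intro i
          have h := hmem i
          by_cases hi : i ∈ t
          · simp only [hi, if_true, mem_insert, mem_singleton] at h
            tauto
          · simp only [hi, if_false, mem_singleton] at h
            tauto
        · rw [hsupp]; exact htm
    rw [this, Fintype.card_piFinset]
    rw [show (fun i => ((if i ∈ t then ({2, -2} : Finset ℤ) else {0})).card) =
        (fun i => if i ∈ t then 2 else 1) from by funext i; split <;> decide]
    rw [Finset.prod_ite_mem univ t (fun _ => 2), univ_inter, prod_const]
  rw [Finset.sum_congr rfl h2]
  -- now  ∑ t ∈ powerset.filter (card ≤ m), 2^t.card = ∑ j ≤ m, C(n,j) 2^j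
  have h3 : (univ : Finset (Fin n)).powerset.filter (fun t => t.card ≤ m) =
      (range (m+1)).biUnion (fun j => powersetCard j (univ : Finset (Fin n))) := by
    ext t
    simp only [mem_filter, mem_powerset, mem_biUnion, mem_range, Nat.lt_succ_iff,
      Finset.mem_powersetCard]
    exact ⟨fun ⟨hs, hc⟩ => ⟨t.card, hc, hs, rfl⟩, fun ⟨j, hj, hs, hc⟩ => ⟨hs, hc ▸ hj⟩⟩
  rw [h3, Finset.sum_biUnion]
  · apply Finset.sum_congr rfl
    intro j _
    have : ∀ t ∈ powersetCard j (univ : Finset (Fin n)), (2:ℕ)^t.card = 2^j := by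
      intro t ht
      rw [(Finset.mem_powersetCard.mp ht).2]
    rw [Finset.sum_congr rfl this, sum_const, card_powersetCard, card_univ, Fintype.card_fin,
      smul_eq_mul]
  · intro a _ b _ hab
    apply Finset.disjoint_left.mpr
    intro t hta htb
    exact hab ((Finset.mem_powersetCard.mp hta).2 ▸ (Finset.mem_powersetCard.mp htb).2.symm ▸ rfl)

lemma Sfin_mono (n : ℕ) {m m' : ℕ} (h : m ≤ m') : Sfin n m ⊆ Sfin n m' := by
  intro p hp
  rcases mem_filter.mp hp with ⟨h1, h2⟩
  exact mem_filter.mpr ⟨h1, h2.trans h⟩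

lemma Sfin_super (a b ma mb : ℕ) :
    (Sfin a ma).card * (Sfin b mb).card ≤ (Sfin (a+b) (ma+mb)).card := by
  rw [← Finset.card_product]
  apply Finset.card_le_card_of_injOn (fun pq => Fin.append pq.1 pq.2)
  · rintro ⟨p, q⟩ hpq
    rcases mem_product.mp hpq with ⟨hp, hq⟩
    rcases mem_filter.mp hp with ⟨hp1, hp2⟩
    rcases mem_filter.mp hq with ⟨hq1, hq2⟩
    refine mem_filter.mpr ⟨?_, ?_⟩
    · rw [Fintype.mem_piFinset]
      intro i
      induction i using Fin.addCases with
      | left i => dsimp only; rw [Fin.append_left]; exact Fintype.mem_piFinset.mp hp1 i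
      | right i => dsimp only; rw [Fin.append_right]; exact Fintype.mem_piFinset.mp hq1 i
    · have : (univ.filter fun i => Fin.append p q i ≠ 0).card
          = (univ.filter fun i => p i ≠ 0).card + (univ.filter fun i => q i ≠ 0).card := by
        simp only [Finset.card_filter]
        rw [Fin.sum_univ_add]
        congr 1
        · exact Finset.sum_congr rfl fun i _ => by rw [Fin.append_left]
        · exact Finset.sum_congr rfl fun i _ => by rw [Fin.append_right]
      rw [this]
      exact Nat.add_le_add hp2 hq2
  · rintro ⟨p, q⟩ - ⟨p', q'⟩ - heq
    have hp : p = p' := by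
      funext i
      have := congrFun heq (Fin.castAdd b i)
      simp only [Fin.append_left] at this; exact this
    have hq : q = q' := by
      funext i
      have := congrFun heq (Fin.natAdd a i)
      simp only [Fin.append_right] at this; exact this
    rw [hp, hq]

lemma base (n : ℕ) (hn : n < 44) :
    15 * 2^n ≤ 128 * ∑ j ∈ range (n/4+1), Nat.choose n j * 2^j := by
  interval_cases n <;>
    norm_num [Finset.sum_range_succ, Nat.choose_eq_descFactorial_div_factorial, Nat.factorial]

lemma g44 : (2:ℕ)^44 ≤ ∑ j ∈ range (44/4+1), Nat.choose 44 j * 2^j := by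
  norm_num [Finset.sum_range_succ, Nat.choose_eq_descFactorial_div_factorial, Nat.factorial]

lemma key (n : ℕ) : 15 * 2^n ≤ 128 * (Sfin n (n/4)).card := by
  induction n using Nat.strong_induction_on with
  | _ n ih =>
    rcases lt_or_ge n 44 with hlt | hge
    · rw [card_Sfin]; exact base n hlt
    · obtain ⟨j, rfl⟩ : ∃ j, n = 44 + j := ⟨n - 44, by omega⟩
      have h1 : (Sfin 44 (44/4)).card * (Sfin j (j/4)).card ≤ (Sfin (44+j) ((44+j)/4)).card := by
        refine (Sfin_super 44 j (44/4) (j/4)).trans (Finset.card_le_card (Sfin_mono _ ?_))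
        omega
      have h2 : 2^44 ≤ (Sfin 44 (44/4)).card := by rw [card_Sfin]; exact g44
      have h3 := ih j (by omega)
      calc 15 * 2^(44+j) = 2^44 * (15 * 2^j) := by ring
        _ ≤ (Sfin 44 (44/4)).card * (128 * (Sfin j (j/4)).card) :=
            Nat.mul_le_mul h2 h3
        _ = 128 * ((Sfin 44 (44/4)).card * (Sfin j (j/4)).card) := by ring
        _ ≤ 128 * (Sfin (44+j) ((44+j)/4)).card := Nat.mul_le_mul_left _ h1

/-- The number of integer vectors `x ∈ ℤ^d` with `x₁² + ⋯ + x_d² ≤ d` and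
`x i ≡ h i (mod 2)` for all `i`. -/
noncomputable def solCard (d : ℕ) (h : Fin d → ZMod 2) : ℕ :=
  Nat.card {x : Fin d → ℤ // (∑ i, (x i) ^ 2) ≤ (d : ℤ) ∧ ∀ i, (x i : ZMod 2) = h i}

/-- The minimum of `|𝒮_h|` over parity vectors `h` with `h₁ + ⋯ + h_d ≡ d (mod 2)`. -/
noncomputable def f₀ (d : ℕ) : ℕ :=
  sInf {c : ℕ | ∃ h : Fin d → ZMod 2, (∑ i, h i) = (d : ZMod 2) ∧ solCard d h = c}

/-- The minimum of `|𝒮_h|` over parity vectors `h` with `h₁ + ⋯ + h_d ≢ d (mod 2)`. -/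
noncomputable def f₁ (d : ℕ) : ℕ :=
  sInf {c : ℕ | ∃ h : Fin d → ZMod 2, (∑ i, h i) ≠ (d : ZMod 2) ∧ solCard d h = c}

lemma zmod2_cases : ∀ z : ZMod 2, z = 0 ∨ z = 1 := by decide

lemma sq_le_three {x : ℤ} (hx : x ^ 2 ≤ 3) : x = 0 ∨ x = 1 ∨ x = -1 := by
  have h1 : -1 ≤ x := by nlinarith [sq_nonneg (x + 1)]
  have h2 : x ≤ 1 := by nlinarith [sq_nonneg (x - 1)]
  omega

lemma sol_finite (d : ℕ) (h : Fin d → ZMod 2) :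
    Finite {x : Fin d → ℤ // (∑ i, (x i) ^ 2) ≤ (d : ℤ) ∧ ∀ i, (x i : ZMod 2) = h i} := by
  classical
  have : ∀ x : {x : Fin d → ℤ // (∑ i, (x i) ^ 2) ≤ (d : ℤ) ∧ ∀ i, (x i : ZMod 2) = h i},
      ∀ i, x.1 i ∈ Set.Icc (-(d:ℤ)) d := by
    rintro ⟨x, hx, -⟩ i
    have h1 : x i ^ 2 ≤ (d : ℤ) := by
      exact le_trans (Finset.single_le_sum (f := fun i => x i ^ 2)
        (fun j _ => sq_nonneg (x j)) (Finset.mem_univ i)) hx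
    constructor
    · nlinarith [sq_nonneg (x i + 1)]
    · nlinarith [sq_nonneg (x i - 1)]
  have hfin : ∀ i : Fin d, (Set.Icc (-(d:ℤ)) d).Finite := fun _ => Set.finite_Icc _ _
  have hft := fun i => (hfin i).to_subtype
  exact Finite.of_injective
    (fun x => (fun i => (⟨x.1 i, this x i⟩ : Set.Icc (-(d:ℤ)) d)))
    (by
      intro a b hab
      apply Subtype.ext
      funext i
      exact congrArg Subtype.val (congrFun hab i))

lemma solCard_lower (d : ℕ) (h : Fin d → ZMod 2) :
    15 * 2^d ≤ 128 * solCard d h := by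
  classical
  set n := Fintype.card {i : Fin d // h i = 0} with hn
  set k := Fintype.card {i : Fin d // ¬ (h i = 0)} with hk
  have hkn : k + n = d := by
    rw [hk, hn, Fintype.card_subtype, Fintype.card_subtype, Nat.add_comm,
      Finset.card_filter_add_card_filter_not (p := fun i => h i = 0), card_univ,
      Fintype.card_fin]
  -- the equivalence for even coordinates
  let eE : Fin n ≃ {i : Fin d // h i = 0} := (Fintype.equivFin {i : Fin d // h i = 0}).symm
  -- the map from the model
  set m := n / 4 with hm
  let F : ({i : Fin d // ¬ (h i = 0)} → Bool) × {p : Fin n → ℤ // p ∈ Sfin n m} →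
      (Fin d → ℤ) := fun bp i =>
    if hh : h i = 0 then bp.2.1 (eE.symm ⟨i, hh⟩) else (if bp.1 ⟨i, hh⟩ then 1 else -1)
  have hmemS : ∀ (p : {p : Fin n → ℤ // p ∈ Sfin n m}) (j : Fin n),
      p.1 j = 0 ∨ p.1 j = 2 ∨ p.1 j = -2 := by
    rintro ⟨p, hp⟩ j
    have := Fintype.mem_piFinset.mp (mem_filter.mp hp).1 j
    simpa using this
  have hsum : ∀ bp, (∑ i, (F bp i) ^ 2) ≤ (d : ℤ) := by
    rintro ⟨b, p⟩
    rw [← Finset.sum_filter_add_sum_filter_not univ (fun i => h i = 0)]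
    have h1 : ∑ i ∈ univ.filter (fun i => h i = 0), (F (b, p) i) ^ 2 ≤ (n : ℤ) := by
      have e1 : ∑ i ∈ univ.filter (fun i => h i = 0), (F (b, p) i) ^ 2
          = ∑ i : {i : Fin d // h i = 0}, (F (b, p) i.1) ^ 2 := by
        rw [Finset.sum_subtype (p := fun i => h i = 0) (univ.filter (fun i => h i = 0))
          (by intro i; simp) (fun i => (F (b, p) i) ^ 2)]
      rw [e1]
      have e2 : ∑ i : {i : Fin d // h i = 0}, (F (b, p) i.1) ^ 2
          = ∑ j : Fin n, p.1 j ^ 2 := by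
        rw [← Equiv.sum_comp eE (fun i => (F (b, p) i.1) ^ 2)]
        apply Finset.sum_congr rfl
        intro j _
        have : F (b, p) (eE j).1 = p.1 j := by
          show (if hh : h (eE j).1 = 0 then _ else _) = _
          rw [dif_pos (eE j).2]
          congr 1
          rw [show (⟨(eE j).1, (eE j).2⟩ : {i : Fin d // h i = 0}) = eE j from rfl,
            Equiv.symm_apply_apply]
        rw [this]
      rw [e2]
      have e3 : ∀ j : Fin n, p.1 j ^ 2 = if p.1 j ≠ 0 then (4:ℤ) else 0 := by
        intro j
        rcases hmemS p j with h0 | h0 | h0 <;> rw [h0] <;> norm_num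
      rw [Finset.sum_congr rfl (fun j _ => e3 j), ← Finset.sum_filter, Finset.sum_const,
        nsmul_eq_mul]
      have hc : (univ.filter fun j => p.1 j ≠ 0).card ≤ m := (mem_filter.mp p.2).2
      have h4 : (univ.filter fun j => p.1 j ≠ 0).card * 4 ≤ n := by omega
      exact_mod_cast Int.ofNat_le.mpr h4
    have h2 : ∑ i ∈ univ.filter (fun i => ¬ (h i = 0)), (F (b, p) i) ^ 2 = (k : ℤ) := by
      have : ∀ i ∈ univ.filter (fun i : Fin d => ¬ (h i = 0)), (F (b, p) i) ^ 2 = 1 := by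
        intro i hi
        have hne : ¬ (h i = 0) := (mem_filter.mp hi).2
        show (if hh : h i = 0 then _ else (if b ⟨i, hh⟩ then (1:ℤ) else -1)) ^ 2 = 1
        rw [dif_neg hne]
        rcases Bool.dichotomy (b ⟨i, hne⟩) with hb | hb <;> rw [hb] <;> norm_num
      rw [Finset.sum_congr rfl this, Finset.sum_const, nsmul_eq_mul, mul_one, hk,
        Fintype.card_subtype]
    rw [h2]
    have : (k : ℤ) + n = d := by exact_mod_cast congrArg (Nat.cast : ℕ → ℤ) hkn
    linarith
  have hpar : ∀ bp i, ((F bp i : ℤ) : ZMod 2) = h i := by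
    rintro ⟨b, p⟩ i
    by_cases hh : h i = 0
    · show ((if hh' : h i = 0 then p.1 (eE.symm ⟨i, hh'⟩) else _ : ℤ) : ZMod 2) = h i
      rw [dif_pos hh, hh]
      rcases hmemS p (eE.symm ⟨i, hh⟩) with h0 | h0 | h0 <;> rw [h0] <;> decide
    · show ((if hh' : h i = 0 then _ else (if b ⟨i, hh'⟩ then (1:ℤ) else -1) : ℤ) : ZMod 2) = h i
      rw [dif_neg hh]
      rcases zmod2_cases (h i) with h0 | h0
      · exact absurd h0 hh
      · rw [h0]
        rcases Bool.dichotomy (b ⟨i, hh⟩) with hb | hb <;> rw [hb] <;> decide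
  let F' : ({i : Fin d // ¬ (h i = 0)} → Bool) × {p : Fin n → ℤ // p ∈ Sfin n m} →
      {x : Fin d → ℤ // (∑ i, (x i) ^ 2) ≤ (d : ℤ) ∧ ∀ i, (x i : ZMod 2) = h i} :=
    fun bp => ⟨F bp, hsum bp, hpar bp⟩
  have hinj : Function.Injective F' := by
    rintro ⟨b, p⟩ ⟨b', p'⟩ heq
    have heq' : F (b, p) = F (b', p') := congrArg Subtype.val heq
    have hb : b = b' := by
      funext o
      obtain ⟨i, ho⟩ := o
      have hval := congrFun heq' i
      simp only [F, dif_neg ho] at hval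
      cases hb1 : b ⟨i, ho⟩ <;> cases hb2 : b' ⟨i, ho⟩
      · rfl
      · simp only [hb1, hb2] at hval; norm_num at hval
      · simp only [hb1, hb2] at hval; norm_num at hval
      · rfl
    have hp : p = p' := by
      apply Subtype.ext
      funext j
      have := congrFun heq' (eE j).1
      simp only [F, dif_pos (eE j).2] at this
      have hsimp : (⟨(eE j).1, (eE j).2⟩ : {i : Fin d // h i = 0}) = eE j := rfl
      rw [hsimp, Equiv.symm_apply_apply] at this
      exact this
    rw [hb, hp]
  have hfin := sol_finite d h
  have hcard := Nat.card_le_card_of_injective F' hinj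
  have hdom : Nat.card (({i : Fin d // ¬ (h i = 0)} → Bool) × {p : Fin n → ℤ // p ∈ Sfin n m})
      = 2 ^ k * (Sfin n m).card := by
    rw [Nat.card_prod, Nat.card_eq_fintype_card, Nat.card_eq_fintype_card, Fintype.card_fun,
      Fintype.card_bool, Fintype.card_coe]
  rw [hdom] at hcard
  have hkey := key n
  calc 15 * 2 ^ d = 2 ^ k * (15 * 2 ^ n) := by rw [← hkn]; ring
    _ ≤ 2 ^ k * (128 * (Sfin n m).card) := Nat.mul_le_mul_left _ hkey
    _ = 128 * (2 ^ k * (Sfin n m).card) := by ring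
    _ ≤ 128 * solCard d h := Nat.mul_le_mul_left _ hcard

lemma ne_zero_of_parity_one {x : ℤ} (hx : (x : ZMod 2) = 1) : x ≠ 0 := by
  intro h0
  rw [h0] at hx
  exact absurd hx (by decide)

lemma one_le_sq_of_ne {x : ℤ} (hx : x ≠ 0) : 1 ≤ x ^ 2 := by
  have h1 : 1 ≤ |x| := Int.one_le_abs hx
  nlinarith [sq_abs x]

-- h = all ones
lemma sum_all_one (d : ℕ) : (∑ _i : Fin d, (1 : ZMod 2)) = (d : ZMod 2) := by
  rw [Finset.sum_const, card_univ, Fintype.card_fin, nsmul_eq_mul, mul_one]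

lemma solCard_all_one_le (d : ℕ) : solCard d (fun _ => 1) ≤ 2 ^ d := by
  classical
  have hfin := sol_finite d (fun _ => 1)
  have hchar : ∀ x : {x : Fin d → ℤ // (∑ i, (x i) ^ 2) ≤ (d : ℤ) ∧
      ∀ i, (x i : ZMod 2) = (fun _ => (1 : ZMod 2)) i}, ∀ i, x.1 i = 1 ∨ x.1 i = -1 := by
    rintro ⟨x, hx, hpar⟩ i
    have h1 : ∀ j, 1 ≤ x j ^ 2 := fun j => one_le_sq_of_ne (ne_zero_of_parity_one (hpar j))
    have herase : ∑ j ∈ univ.erase i, x j ^ 2 + x i ^ 2 = ∑ j, x j ^ 2 :=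
      Finset.sum_erase_add univ _ (mem_univ i)
    have hlb : ((univ.erase i).card : ℤ) ≤ ∑ j ∈ univ.erase i, x j ^ 2 := by
      have := Finset.card_nsmul_le_sum (univ.erase i) (fun j => x j ^ 2) 1
        (fun j _ => h1 j)
      simpa using this
    have hcard : (univ.erase i).card = d - 1 := by
      rw [Finset.card_erase_of_mem (mem_univ i), card_univ, Fintype.card_fin]
    have hd : 1 ≤ d := i.pos
    have hcard' : ((univ.erase i).card : ℤ) = (d : ℤ) - 1 := by
      rw [hcard]; push_cast [hd]; ring
    have hsq : x i ^ 2 ≤ 3 := by linarith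
    rcases sq_le_three hsq with h0 | h0 | h0
    · exact absurd h0 (ne_zero_of_parity_one (hpar i))
    · exact Or.inl h0
    · exact Or.inr h0
  have hle : Nat.card {x : Fin d → ℤ // (∑ i, (x i) ^ 2) ≤ (d : ℤ) ∧
      ∀ i, (x i : ZMod 2) = (fun _ => (1 : ZMod 2)) i} ≤ Nat.card (Fin d → Bool) := by
    apply Nat.card_le_card_of_injective (fun x => fun i => decide (x.1 i = 1))
    intro a b hab
    apply Subtype.ext
    funext i
    have hi : decide (a.1 i = 1) = decide (b.1 i = 1) := congrFun hab i
    rcases hchar a i with ha | ha <;> rcases hchar b i with hb | hb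
    · rw [ha, hb]
    · rw [ha, hb] at hi; simp at hi
    · rw [ha, hb] at hi; simp at hi
    · rw [ha, hb]
  calc solCard d (fun _ => 1) ≤ Nat.card (Fin d → Bool) := hle
    _ = 2 ^ d := by simp [Nat.card_eq_fintype_card]

-- h = one zero at position 0, rest ones
def hOne (d : ℕ) : Fin d → ZMod 2 := fun i => if (i : ℕ) = 0 then 0 else 1

lemma sum_hOne (d : ℕ) (hd : 1 ≤ d) : (∑ i, hOne d i) ≠ (d : ZMod 2) := by
  classical
  have hsum : (∑ i, hOne d i) = (d : ZMod 2) - 1 := by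
    have h1 : (∑ i, hOne d i) =
        ∑ i ∈ univ.filter (fun i : Fin d => ¬ ((i : ℕ) = 0)), 1 := by
      rw [Finset.sum_filter]
      apply Finset.sum_congr rfl
      intro i _
      by_cases hi : (i : ℕ) = 0 <;> simp [hOne, hi]
    have h2 : (univ.filter (fun i : Fin d => ¬ ((i : ℕ) = 0))).card = d - 1 := by
      have h3 : (univ.filter (fun i : Fin d => (i : ℕ) = 0)).card = 1 := by
        rw [show (univ.filter (fun i : Fin d => (i : ℕ) = 0)) = {⟨0, hd⟩} from by
          ext i
          simp only [mem_filter, mem_univ, true_and, mem_singleton]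
          constructor
          · intro hi; exact Fin.ext hi
          · intro hi; rw [hi]]
        rfl
      have h4 := Finset.card_filter_add_card_filter_not
        (s := (univ : Finset (Fin d))) (p := fun i : Fin d => (i : ℕ) = 0)
      rw [card_univ, Fintype.card_fin] at h4
      omega
    rw [h1, Finset.sum_const, h2, nsmul_eq_mul, mul_one]
    have : ((d - 1 : ℕ) : ZMod 2) = (d : ZMod 2) - 1 := by
      push_cast [hd]; ring
    exact this
  rw [hsum]
  intro heq
  have h10 : (1 : ZMod 2) = 0 := by
    have := sub_eq_iff_eq_add.mp heq
    have h2 : (0 : ZMod 2) = 1 := by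
      have := congrArg (fun z => z - (d : ZMod 2)) this
      simpa using this
    exact h2.symm
  exact absurd h10 (by decide)

lemma solCard_hOne_le (d : ℕ) (hd : 1 ≤ d) : solCard d (hOne d) ≤ 2 ^ d := by
  classical
  have hfin := sol_finite d (hOne d)
  set P : Fin d := ⟨0, hd⟩ with hP
  have hchar : ∀ x : {x : Fin d → ℤ // (∑ i, (x i) ^ 2) ≤ (d : ℤ) ∧
      ∀ i, (x i : ZMod 2) = hOne d i},
      (x.1 P = 0) ∧ ∀ i, i ≠ P → (x.1 i = 1 ∨ x.1 i = -1) := by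
    rintro ⟨x, hx, hpar⟩
    have hne : ∀ j, j ≠ P → x j ≠ 0 := by
      intro j hj
      have hpj := hpar j
      have : hOne d j = 1 := by
        have : ¬ ((j : ℕ) = 0) := by
          intro h0
          exact hj (Fin.ext h0)
        simp [hOne, this]
      rw [this] at hpj
      exact ne_zero_of_parity_one hpj
    have h1 : ∀ j, j ≠ P → 1 ≤ x j ^ 2 := fun j hj => one_le_sq_of_ne (hne j hj)
    -- first: x P = 0
    have herase : ∑ j ∈ univ.erase P, x j ^ 2 + x P ^ 2 = ∑ j, x j ^ 2 :=
      Finset.sum_erase_add univ _ (mem_univ P)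
    have hlb : ((univ.erase P).card : ℤ) ≤ ∑ j ∈ univ.erase P, x j ^ 2 := by
      have := Finset.card_nsmul_le_sum (univ.erase P) (fun j => x j ^ 2) 1
        (fun j hj => h1 j (Finset.ne_of_mem_erase hj))
      simpa using this
    have hcardP : ((univ.erase P).card : ℤ) = (d : ℤ) - 1 := by
      rw [Finset.card_erase_of_mem (mem_univ P), card_univ, Fintype.card_fin]
      push_cast [hd]; ring
    have hsqP : x P ^ 2 ≤ 3 := by linarith
    have hparP : (x P : ZMod 2) = 0 := by
      have := hpar P
      simpa [hOne, hP] using this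
    have hxP : x P = 0 := by
      rcases sq_le_three hsqP with h0 | h0 | h0
      · exact h0
      · rw [h0] at hparP; exact absurd hparP (by decide)
      · rw [h0] at hparP; exact absurd hparP (by decide)
    refine ⟨hxP, ?_⟩
    intro i hi
    have hPi : P ∈ univ.erase i := Finset.mem_erase.mpr ⟨fun h => hi h.symm, mem_univ P⟩
    have herase2 : ∑ j ∈ (univ.erase i).erase P, x j ^ 2 + x P ^ 2
        = ∑ j ∈ univ.erase i, x j ^ 2 := Finset.sum_erase_add _ _ hPi
    have herase1 : ∑ j ∈ univ.erase i, x j ^ 2 + x i ^ 2 = ∑ j, x j ^ 2 :=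
      Finset.sum_erase_add univ _ (mem_univ i)
    have hlb2 : (((univ.erase i).erase P).card : ℤ) ≤ ∑ j ∈ (univ.erase i).erase P, x j ^ 2 := by
      have := Finset.card_nsmul_le_sum ((univ.erase i).erase P) (fun j => x j ^ 2) 1
        (fun j hj => h1 j (Finset.ne_of_mem_erase hj))
      simpa using this
    have hd2 : 2 ≤ d := by
      have := i.2
      have hine : (i : ℕ) ≠ 0 := fun h0 => hi (Fin.ext h0)
      omega
    have hcard2 : (((univ.erase i).erase P).card : ℤ) = (d : ℤ) - 2 := by
      rw [Finset.card_erase_of_mem hPi, Finset.card_erase_of_mem (mem_univ i),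
        card_univ, Fintype.card_fin]
      omega
    have hsqi : x i ^ 2 ≤ 3 := by
      rw [hxP] at herase2
      linarith
    rcases sq_le_three hsqi with h0 | h0 | h0
    · exact absurd h0 (hne i hi)
    · exact Or.inl h0
    · exact Or.inr h0
  have hle : Nat.card {x : Fin d → ℤ // (∑ i, (x i) ^ 2) ≤ (d : ℤ) ∧
      ∀ i, (x i : ZMod 2) = hOne d i} ≤ Nat.card (Fin d → Bool) := by
    apply Nat.card_le_card_of_injective (fun x => fun i => decide (x.1 i = 1))
    intro a b hab
    apply Subtype.ext
    funext i
    have hi : decide (a.1 i = 1) = decide (b.1 i = 1) := congrFun hab i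
    by_cases hiP : i = P
    · rw [hiP, (hchar a).1, (hchar b).1]
    · rcases (hchar a).2 i hiP with ha | ha <;> rcases (hchar b).2 i hiP with hb | hb
      · rw [ha, hb]
      · rw [ha, hb] at hi; simp at hi
      · rw [ha, hb] at hi; simp at hi
      · rw [ha, hb]
  calc solCard d (hOne d) ≤ Nat.card (Fin d → Bool) := hle
    _ = 2 ^ d := by simp [Nat.card_eq_fintype_card]

theorem optimal_orthogonal_inequality (d : ℕ) (hd : 1 ≤ d) :
    ((15 : ℝ) / 2 ^ 7) * 2 ^ d ≤ (f₀ d : ℝ) ∧ (f₀ d : ℝ) ≤ 2 ^ d ∧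
      ((15 : ℝ) / 2 ^ 7) * 2 ^ d ≤ (f₁ d : ℝ) ∧ (f₁ d : ℝ) ≤ 2 ^ d := by
  have hmem₀ : solCard d (fun _ => 1) ∈
      {c : ℕ | ∃ h : Fin d → ZMod 2, (∑ i, h i) = (d : ZMod 2) ∧ solCard d h = c} :=
    ⟨fun _ => 1, sum_all_one d, rfl⟩
  have hmem₁ : solCard d (hOne d) ∈
      {c : ℕ | ∃ h : Fin d → ZMod 2, (∑ i, h i) ≠ (d : ZMod 2) ∧ solCard d h = c} :=
    ⟨hOne d, sum_hOne d hd, rfl⟩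
  have hub₀ : f₀ d ≤ 2 ^ d := (Nat.sInf_le hmem₀).trans (solCard_all_one_le d)
  have hub₁ : f₁ d ≤ 2 ^ d := (Nat.sInf_le hmem₁).trans (solCard_hOne_le d hd)
  obtain ⟨h₀, -, hc₀⟩ := Nat.sInf_mem (⟨_, hmem₀⟩ : Set.Nonempty _)
  obtain ⟨h₁, -, hc₁⟩ := Nat.sInf_mem (⟨_, hmem₁⟩ : Set.Nonempty _)
  have hlb₀ : 15 * 2 ^ d ≤ 128 * f₀ d := by
    rw [f₀, ← hc₀]; exact solCard_lower d h₀
  have hlb₁ : 15 * 2 ^ d ≤ 128 * f₁ d := by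
    rw [f₁, ← hc₁]; exact solCard_lower d h₁
  have cast₀ : (15 : ℝ) * 2 ^ d ≤ 128 * (f₀ d : ℝ) := by exact_mod_cast hlb₀
  have cast₁ : (15 : ℝ) * 2 ^ d ≤ 128 * (f₁ d : ℝ) := by exact_mod_cast hlb₁
  refine ⟨?_, by exact_mod_cast hub₀, ?_, by exact_mod_cast hub₁⟩
  · rw [div_mul_eq_mul_div, div_le_iff₀ (by norm_num : (0:ℝ) < 2 ^ 7)]
    linarith
  · rw [div_mul_eq_mul_div, div_le_iff₀ (by norm_num : (0:ℝ) < 2 ^ 7)]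
    linarith
end
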